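/- arXiv:1507.08323 — 10 statements merged into one kernel-verified Lean document; each statement's English description precedes it below -/
import Mathlib

section
/- Let T = diag(λ₁, λ₂) be a 2×2 diagonal matrix over ℂ with λ₂ = conj(λ₁). Then T is not convex-cyclic on ℂ²: for every vector v, the set {p(T)v : p a convex-polynomial} is not dense in ℂ². -/
/-! A convex-polynomial has real coefficients, so `p(λ̄) = conj (p(λ))` and
`p(T) v = (p(λ) v₀, conj (p(λ)) v₁)` lies in the image of the `ℝ`-linear map `z ↦ (z v₀, z̄ v₁)`.
That image has real dimension at most `2` inside the `4`-dimensional real space `ℂ²`, and, being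
finite-dimensional, it is closed; so it cannot contain a dense set. -/

/-- A convex-polynomial: a convex combination of the monomials `1, z, z², …`. -/
def IsConvexPoly (p : Polynomial ℂ) : Prop :=
  ∃ (n : ℕ) (a : ℕ → ℝ), (∀ k, 0 ≤ a k) ∧ (∑ k ∈ Finset.range (n + 1), a k) = 1 ∧
    p = ∑ k ∈ Finset.range (n + 1), Polynomial.C ((a k : ℂ)) * Polynomial.X ^ k

open Polynomial Matrix Module

theorem Matrix.aeval_diagonal_mulVec {n R : Type*} [Fintype n] [DecidableEq n] [CommRing R]
    (d : n → R) (p : R[X]) (v : n → R) :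
    aeval (diagonal d) p *ᵥ v = fun i => aeval (d i) p * v i := by
  ext i
  rw [← diagonalAlgHom_apply (R := R), aeval_algHom_apply, diagonalAlgHom_apply, mulVec_diagonal]
  exact congrArg (· * v i) (aeval_algHom_apply (Pi.evalAlgHom R (fun _ => R) i) d p).symm

theorem IsConvexPoly.exists_map_real {p : ℂ[X]} (hp : IsConvexPoly p) :
    ∃ q : ℝ[X], q.map (algebraMap ℝ ℂ) = p := by
  obtain ⟨n, a, -, -, rfl⟩ := hp
  exact ⟨∑ k ∈ Finset.range (n + 1), C (a k) * X ^ k, by simp [Polynomial.map_sum]⟩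

theorem IsConvexPoly.aeval_conj {p : ℂ[X]} (hp : IsConvexPoly p) (z : ℂ) :
    aeval (starRingEnd ℂ z) p = starRingEnd ℂ (aeval z p) := by
  obtain ⟨q, rfl⟩ := hp.exists_map_real
  simp only [aeval_map_algebraMap]
  exact Polynomial.aeval_conj q z

theorem Submodule.not_dense_of_subset_of_ne_top {𝕜 E : Type*} [NontriviallyNormedField 𝕜]
    [CompleteSpace 𝕜] [AddCommGroup E] [TopologicalSpace E] [IsTopologicalAddGroup E]
    [Module 𝕜 E] [ContinuousSMul 𝕜 E] [T2Space E] {K : Submodule 𝕜 E} [FiniteDimensional 𝕜 K]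
    (hK : K ≠ ⊤) {s : Set E} (hs : s ⊆ K) : ¬ Dense s := fun hdense =>
  hK <| SetLike.coe_injective <|
    (hdense.mono hs).closure_eq.symm.trans K.closed_of_finiteDimensional.closure_eq |>.symm

def conjPairMap (x y : ℂ) : ℂ →ₗ[ℝ] (Fin 2 → ℂ) where
  toFun z := ![z * x, starRingEnd ℂ z * y]
  map_add' z w := by ext i; fin_cases i <;> simp [add_mul]
  map_smul' c z := by ext i; fin_cases i <;> simp [Complex.real_smul, mul_assoc]

theorem range_conjPairMap_ne_top (x y : ℂ) : LinearMap.range (conjPairMap x y) ≠ ⊤ := by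
  intro htop
  have hrank := LinearMap.finrank_range_le (conjPairMap x y)
  rw [htop, finrank_top, finrank_pi_fintype, Complex.finrank_real_complex] at hrank
  norm_num at hrank

theorem diag_conj_pair_not_convexCyclic (lam : ℂ)
    (T : Matrix (Fin 2) (Fin 2) ℂ)
    (hT : T = Matrix.diagonal ![lam, starRingEnd ℂ lam]) :
    ∀ v : Fin 2 → ℂ,
      ¬ Dense {w : Fin 2 → ℂ |
          ∃ p, IsConvexPoly p ∧ (Polynomial.aeval T p).mulVec v = w} := by
  intro v
  refine Submodule.not_dense_of_subset_of_ne_top (range_conjPairMap_ne_top (v 0) (v 1)) ?_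
  rintro _ ⟨p, hp, rfl⟩
  refine ⟨aeval lam p, ?_⟩
  ext i
  fin_cases i <;> simp [hT, aeval_diagonal_mulVec, hp.aeval_conj, conjPairMap]
end

section
/- If T is a convex-cyclic continuous linear operator on a complex locally convex space X, then the adjoint T* has no eigenvalue that is real, and no eigenvalue in the closed unit disk. -/
section Eigenfunctional

open Polynomial

variable {R M : Type*} [CommRing R] [TopologicalSpace R] [AddCommGroup M] [Module R M]
  [TopologicalSpace M] [IsTopologicalAddGroup M] [ContinuousConstSMul R M]

theorem ContinuousLinearMap.apply_aeval_of_apply_eq_mul {T : M →L[R] M} {f : M →L[R] R} {lam : R}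
    (heig : ∀ x, f (T x) = lam * f x) (p : R[X]) (x : M) :
    f (aeval T p x) = p.eval lam * f x := by
  induction p using Polynomial.induction_on generalizing x with
  | C a => simp [Algebra.algebraMap_eq_smul_one]
  | add p q hp hq => simp [hp, hq, add_mul]
  | monomial n a ih =>
    rw [pow_succ, ← mul_assoc, map_mul, aeval_X, mul_apply_eq_comp, ih, heig]
    simp only [eval_mul, eval_pow, eval_X, eval_C]
    ring

theorem dense_setOf_eval_of_dense_setOf_aeval {𝕜 : Type*} [NormedField 𝕜] [Module 𝕜 M]
    [ContinuousConstSMul 𝕜 M] {T : M →L[𝕜] M} {f : M →L[𝕜] 𝕜} (hf : f ≠ 0) {lam : 𝕜}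
    (heig : ∀ x, f (T x) = lam * f x) (P : 𝕜[X] → Prop) {x : M}
    (hx : Dense {y | ∃ p, P p ∧ aeval T p x = y}) :
    Dense {w | ∃ p, P p ∧ p.eval lam = w} := by
  set S := {w | ∃ p, P p ∧ p.eval lam = w}
  have himage : f '' {y | ∃ p, P p ∧ aeval T p x = y} = (· * f x) '' S := by
    ext w
    simp [S, ContinuousLinearMap.apply_aeval_of_apply_eq_mul heig]
  have hdense : Dense ((· * f x) '' S) :=
    himage ▸ (LinearMap.surjective (ContinuousLinearMap.coe_injective.ne hf)).denseRange.dense_image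
      f.continuous hx
  have hfx : f x ≠ 0 := by
    intro h0
    have hsub : (· * f x) '' S ⊆ {0} := by
      rintro _ ⟨w, -, rfl⟩
      simp [h0]
    simpa using isClosed_singleton.closure_subset_iff.2 hsub (hdense 1)
  exact (Homeomorph.mulRight₀ (f x) hfx).isDenseEmbedding.dense_image.1 hdense

end Eigenfunctional

namespace IsConvexPoly

open Polynomial

theorem im_eval_ofReal {p : ℂ[X]} (hp : IsConvexPoly p) (r : ℝ) : (p.eval (r : ℂ)).im = 0 := by
  obtain ⟨n, a, -, -, rfl⟩ := hp
  simp [eval_finsetSum, Complex.im_sum, ← Complex.ofReal_pow]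

theorem norm_eval_le_one {p : ℂ[X]} (hp : IsConvexPoly p) {z : ℂ} (hz : ‖z‖ ≤ 1) :
    ‖p.eval z‖ ≤ 1 := by
  obtain ⟨n, a, ha, hsum, rfl⟩ := hp
  rw [eval_finsetSum, ← hsum]
  refine (norm_sum_le _ _).trans (Finset.sum_le_sum fun k _ => ?_)
  rw [eval_mul, eval_C, eval_pow, eval_X, norm_mul, norm_pow, Complex.norm_real,
    Real.norm_of_nonneg (ha k)]
  exact mul_le_of_le_one_right (ha k) (pow_le_one₀ (norm_nonneg z) hz)

end IsConvexPoly

theorem adjoint_eigenvalue_not_real_not_in_disk_general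
    {X : Type*} [AddCommGroup X] [Module ℂ X]
    [TopologicalSpace X] [IsTopologicalAddGroup X] [ContinuousSMul ℂ X]
    (T : X →L[ℂ] X)
    (hcc : ∃ x : X, Dense {y : X | ∃ p, IsConvexPoly p ∧ (Polynomial.aeval T) p x = y})
    (lam : ℂ) (f : X →L[ℂ] ℂ) (hf : f ≠ 0) (heig : ∀ x, f (T x) = lam * f x) :
    lam.im ≠ 0 ∧ 1 < ‖lam‖ := by
  obtain ⟨x, hx⟩ := hcc
  have hS := dense_setOf_eval_of_dense_setOf_aeval hf heig IsConvexPoly hx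
  constructor
  · intro him
    lift lam to ℝ using him
    have hsub : {w | ∃ p, IsConvexPoly p ∧ p.eval (lam : ℂ) = w} ⊆ {w : ℂ | w.im = 0} := by
      rintro _ ⟨p, hp, rfl⟩
      exact hp.im_eval_ofReal lam
    simpa using (isClosed_eq Complex.continuous_im continuous_const).closure_subset_iff.2 hsub
      (hS Complex.I)
  · by_contra! hle
    have hsub : {w | ∃ p, IsConvexPoly p ∧ p.eval lam = w} ⊆ Metric.closedBall 0 1 := by
      rintro _ ⟨p, hp, rfl⟩
      simpa using hp.norm_eval_le_one hle
    have h2 := Metric.isClosed_closedBall.closure_subset_iff.2 hsub (hS 2)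
    norm_num at h2

/-- If `T` is a convex-cyclic continuous linear operator on a complex locally convex space,
then no eigenvalue of `T*` is real or lies in the closed unit disk. -/
theorem adjoint_eigenvalue_not_real_not_in_disk
    {X : Type*} [AddCommGroup X] [Module ℂ X] [Module ℝ X] [IsScalarTower ℝ ℂ X]
    [TopologicalSpace X] [IsTopologicalAddGroup X] [ContinuousSMul ℂ X]
    [LocallyConvexSpace ℝ X]
    (T : X →L[ℂ] X)
    (hcc : ∃ x : X, Dense {y : X | ∃ p, IsConvexPoly p ∧ (Polynomial.aeval T) p x = y})
    (lam : ℂ) (f : X →L[ℂ] ℂ) (hf : f ≠ 0) (heig : ∀ x, f (T x) = lam * f x) :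
    lam.im ≠ 0 ∧ 1 < ‖lam‖ :=
  adjoint_eigenvalue_not_real_not_in_disk_general T hcc lam f hf heig
end

section
/- If T is a convex-cyclic continuous linear operator on a complex locally convex space X and λ₁, λ₂ are eigenvalues of T*, then λ₂ ≠ conj(λ₁). -/
open Polynomial ComplexConjugate

section Eigenfunctional

variable {R M : Type*} [CommRing R] [TopologicalSpace R] [AddCommGroup M] [Module R M]
  [TopologicalSpace M] {T : M →L[R] M} {f : M →L[R] R} {lam : R}

theorem apply_iterate_apply_of_eigen (hf : ∀ y, f (T y) = lam * f y) (k : ℕ) (y : M) :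
    f (T^[k] y) = lam ^ k * f y := by
  induction k with
  | zero => simp
  | succ k ih => rw [Function.iterate_succ_apply', hf, ih, pow_succ', mul_assoc]

theorem apply_aeval_apply_of_eigen [IsTopologicalAddGroup M] [ContinuousConstSMul R M]
    (hf : ∀ y, f (T y) = lam * f y) (p : R[X]) (y : M) :
    f (aeval T p y) = p.eval lam * f y := by
  induction p using Polynomial.induction_on' with
  | add p q hp hq => simp only [map_add, add_apply, hp, hq, eval_add, add_mul]
  | monomial n a =>
    simp [aeval_monomial, apply_iterate_apply_of_eigen hf, mul_assoc]

end Eigenfunctional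

theorem conj_eval_of_isConvexPoly {p : ℂ[X]} (hp : IsConvexPoly p) (z : ℂ) :
    conj (p.eval z) = p.eval (conj z) := by
  obtain ⟨n, a, -, -, rfl⟩ := hp
  simp [eval_finsetSum]

section ConvexCyclic

variable {X : Type*} [AddCommGroup X] [Module ℂ X] [TopologicalSpace X]
  [IsTopologicalAddGroup X] [ContinuousConstSMul ℂ X] {T : X →L[ℂ] X} {x : X}

theorem eigenfunctional_apply_ne_zero
    (hx : Dense {y : X | ∃ p, IsConvexPoly p ∧ aeval T p x = y})
    {f : X →L[ℂ] ℂ} {lam : ℂ} (hf0 : f ≠ 0) (hf : ∀ y, f (T y) = lam * f y) : f x ≠ 0 := by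
  intro hfx
  refine hf0 (DFunLike.coe_injective ?_)
  refine Continuous.ext_on hx f.continuous continuous_zero ?_
  rintro _ ⟨p, -, rfl⟩
  simp [apply_aeval_apply_of_eigen hf, hfx]

theorem conj_apply_mul_eq_of_eigen_conj
    (hx : Dense {y : X | ∃ p, IsConvexPoly p ∧ aeval T p x = y})
    {f₁ f₂ : X →L[ℂ] ℂ} {lam : ℂ}
    (hf₁ : ∀ y, f₁ (T y) = lam * f₁ y) (hf₂ : ∀ y, f₂ (T y) = conj lam * f₂ y) (y : X) :
    conj (f₁ y) * f₂ x = conj (f₁ x) * f₂ y := by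
  have hcont : Continuous fun y ↦ conj (f₁ y) * f₂ x :=
    (Complex.continuous_conj.comp f₁.continuous).mul continuous_const
  have hcont' : Continuous fun y ↦ conj (f₁ x) * f₂ y := continuous_const.mul f₂.continuous
  refine congrFun (Continuous.ext_on hx hcont hcont' ?_) y
  rintro _ ⟨p, hp, rfl⟩
  simp only [apply_aeval_apply_of_eigen hf₁, apply_aeval_apply_of_eigen hf₂, map_mul,
    conj_eval_of_isConvexPoly hp]
  ring

end ConvexCyclic

theorem adjoint_eigenvalues_not_conjugate_general
    {X : Type*} [AddCommGroup X] [Module ℂ X]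
    [TopologicalSpace X] [IsTopologicalAddGroup X] [ContinuousSMul ℂ X]
    (T : X →L[ℂ] X)
    (hcc : ∃ x : X, Dense {y : X | ∃ p, IsConvexPoly p ∧ (Polynomial.aeval T) p x = y})
    (lam₁ lam₂ : ℂ)
    (f₁ : X →L[ℂ] ℂ) (hf₁ : f₁ ≠ 0) (heig₁ : ∀ x, f₁ (T x) = lam₁ * f₁ x)
    (f₂ : X →L[ℂ] ℂ) (hf₂ : f₂ ≠ 0) (heig₂ : ∀ x, f₂ (T x) = lam₂ * f₂ x) :
    lam₂ ≠ starRingEnd ℂ lam₁ := by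
  rintro rfl
  obtain ⟨x, hx⟩ := hcc
  have hf₁x := eigenfunctional_apply_ne_zero hx hf₁ heig₁
  have hf₂x := eigenfunctional_apply_ne_zero hx hf₂ heig₂
  have hIx := conj_apply_mul_eq_of_eigen_conj hx heig₁ heig₂ (Complex.I • x)
  simp only [map_smul, smul_eq_mul, map_mul, Complex.conj_I] at hIx
  have : Complex.I * (conj (f₁ x) * f₂ x) = 0 := by linear_combination -hIx / 2
  simp [Complex.I_ne_zero, hf₁x, hf₂x] at this

/-- If `T` is convex-cyclic and `λ₁, λ₂` are eigenvalues of `T*`, then `λ₂ ≠ conj λ₁`. -/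
theorem adjoint_eigenvalues_not_conjugate
    {X : Type*} [AddCommGroup X] [Module ℂ X] [Module ℝ X] [IsScalarTower ℝ ℂ X]
    [TopologicalSpace X] [IsTopologicalAddGroup X] [ContinuousSMul ℂ X]
    [LocallyConvexSpace ℝ X]
    (T : X →L[ℂ] X)
    (hcc : ∃ x : X, Dense {y : X | ∃ p, IsConvexPoly p ∧ (Polynomial.aeval T) p x = y})
    (lam₁ lam₂ : ℂ)
    (f₁ : X →L[ℂ] ℂ) (hf₁ : f₁ ≠ 0) (heig₁ : ∀ x, f₁ (T x) = lam₁ * f₁ x)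
    (f₂ : X →L[ℂ] ℂ) (hf₂ : f₂ ≠ 0) (heig₂ : ∀ x, f₂ (T x) = lam₂ * f₂ x) :
    lam₂ ≠ starRingEnd ℂ lam₁ :=
  adjoint_eigenvalues_not_conjugate_general T hcc lam₁ lam₂ f₁ hf₁ heig₁ f₂ hf₂ heig₂
end

section
/- Let X be a locally convex space, T : X → X a continuous linear operator, and x ∈ X. Then the convex hull of the orbit {Tⁿx : n ≥ 0} is dense in X if and only if for every nonzero continuous linear functional f on X, sup_{n ≥ 0} Re(f(Tⁿx)) = +∞. -/
/-!
A closed half-space `{y | re (f y) ≤ M}` is closed and convex, so if it contains the orbit it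
contains the closure of its convex hull; when that closure is all of `X`, `re ∘ f` is bounded
above on `X`, which forces `f = 0` because a nonzero functional is surjective. Conversely, a point
outside the closed convex hull is separated from it by Hahn–Banach, giving a functional whose real
part is bounded above on the orbit.
-/

open RCLike

theorem Module.Dual.not_bddAbove_range_re {𝕜 M : Type*} [RCLike 𝕜] [AddCommGroup M]
    [Module 𝕜 M] {f : Module.Dual 𝕜 M} (hf : f ≠ 0) :
    ¬BddAbove (Set.range fun y => re (f y)) := by
  rw [not_bddAbove_iff]
  intro r
  obtain ⟨y, hy⟩ := LinearMap.surjective hf ((r + 1 : ℝ) : 𝕜)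
  exact ⟨_, ⟨y, rfl⟩, by simp [hy]⟩

theorem dense_convexHull_iff_forall_not_bddAbove_re
    {𝕜 X : Type*} [RCLike 𝕜] [AddCommGroup X] [Module 𝕜 X] [Module ℝ X]
    [IsScalarTower ℝ 𝕜 X] [TopologicalSpace X] [IsTopologicalAddGroup X]
    [ContinuousSMul 𝕜 X] [LocallyConvexSpace ℝ X] {s : Set X} (hs : s.Nonempty) :
    Dense (convexHull ℝ s) ↔
      ∀ f : StrongDual 𝕜 X, f ≠ 0 → ¬BddAbove ((fun y => re (f y)) '' s) := by
  constructor
  · rintro hdense f hf ⟨r, hr⟩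
    have hconv : Convex ℝ {y | re (f y) ≤ r} :=
      convex_halfSpace_le ((StrongDual.extendRCLikeₗ (𝕜 := 𝕜)).symm f).isLinear r
    have hclosed : IsClosed {y | re (f y) ≤ r} :=
      isClosed_le (by fun_prop) continuous_const
    have hall : closure (convexHull ℝ s) ⊆ {y | re (f y) ≤ r} :=
      closure_minimal (convexHull_min (fun y hy => hr ⟨y, hy, rfl⟩) hconv) hclosed
    rw [hdense.closure_eq] at hall
    exact Module.Dual.not_bddAbove_range_re (f := f.toLinearMap)
      (ContinuousLinearMap.coe_injective.ne hf) ⟨r, by rintro _ ⟨y, rfl⟩; exact hall trivial⟩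
  · intro hunbdd
    by_contra hnot
    have := IsScalarTower.continuousSMul (M := ℝ) (α := X) 𝕜
    obtain ⟨z, hz⟩ := (Set.ne_univ_iff_exists_notMem _).mp (dense_iff_closure_eq.not.mp hnot)
    obtain ⟨f, u, hfu, huz⟩ := RCLike.geometric_hahn_banach_closed_point (𝕜 := 𝕜)
      (convex_convexHull ℝ s).closure isClosed_closure hz
    have hlt : ∀ y ∈ s, re (f y) < u := fun y hy =>
      hfu y (subset_closure (subset_convexHull ℝ s hy))
    have hf : f ≠ 0 := by
      rintro rfl
      obtain ⟨y, hy⟩ := hs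
      simpa using (hlt y hy).trans huz
    exact hunbdd f hf ⟨u, by rintro _ ⟨y, hy, rfl⟩; exact (hlt y hy).le⟩

/-- Hahn–Banach characterization of convex-cyclic vectors: the convex hull of the
orbit of `x` under `T` is dense iff `sup_n Re (f (Tⁿ x)) = ∞` for every nonzero
continuous linear functional `f`. -/
theorem convexHull_orbit_dense_iff
    {𝕜 X : Type*} [RCLike 𝕜] [AddCommGroup X] [Module 𝕜 X] [Module ℝ X]
    [IsScalarTower ℝ 𝕜 X] [TopologicalSpace X] [IsTopologicalAddGroup X]
    [ContinuousSMul 𝕜 X] [LocallyConvexSpace ℝ X]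
    (T : X →L[𝕜] X) (x : X) :
    Dense (convexHull ℝ (Set.range fun n : ℕ => (T ^ n) x)) ↔
      ∀ f : X →L[𝕜] 𝕜, f ≠ 0 → ∀ M : ℝ, ∃ n : ℕ, M < RCLike.re (f ((T ^ n) x)) := by
  rw [dense_convexHull_iff_forall_not_bddAbove_re (𝕜 := 𝕜) (Set.range_nonempty _)]
  simp only [← Set.range_comp, not_bddAbove_iff, Set.exists_range_iff, Function.comp_apply]
end

section
/- Let T₁ and T₂ be continuous convex-cyclic linear operators on locally convex spaces X₁ and X₂. If there exists a convex-polynomial p₀ such that p₀(T₁) is convex-cyclic and p₀(T₂) is power bounded, then T₁ ⊕ T₂ is convex-cyclic on X₁ ⊕ X₂. Moreover, if u₁ is a convex-cyclic vector for p₀(T₁) and u₂ is a convex-cyclic vector for T₂, then (u₁, u₂) is a convex-cyclic vector for T₁ ⊕ T₂. -/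
/-!
Let `C` be the convex hull of the orbit of `u = (u₁, u₂)` under `T₁ ⊕ T₂`. It is convex and
`T₁ ⊕ T₂`-invariant, hence invariant under `p₀(T₁ ⊕ T₂) = p₀(T₁) ⊕ p₀(T₂)`, so it contains the
convex hull `D` of the `p₀(T₁ ⊕ T₂)`-orbit of `u`. The second coordinates of `C` are dense; the first
coordinates of `D` are dense and its second coordinates bounded (power boundedness plus local
convexity). To approach `(y₁, y₂)`, take `c ∈ C` with `c₂` near `y₂` and a small `t > 0`: the points
`(1 - t) c + t d` with `d ∈ D` lie in `C`, their second coordinates stay near `y₂`, and their first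
coordinates `(1 - t) c₁ + t d₁` run through a dense set.
-/

/-- A convex-polynomial over `𝕜`: a convex combination of the monomials. -/
def IsConvexPolyK {𝕜 : Type*} [RCLike 𝕜] (p : Polynomial 𝕜) : Prop :=
  ∃ (n : ℕ) (a : ℕ → ℝ), (∀ k, 0 ≤ a k) ∧ (∑ k ∈ Finset.range (n + 1), a k) = 1 ∧
    p = ∑ k ∈ Finset.range (n + 1), Polynomial.C ((a k : 𝕜)) * Polynomial.X ^ k

open Set Filter Topology Bornology Polynomial Pointwise

section Bounded

variable {E : Type*} [AddCommGroup E] [Module ℝ E] [TopologicalSpace E]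

theorem Bornology.IsVonNBounded.convexHull [IsTopologicalAddGroup E] [LocallyConvexSpace ℝ E]
    {s : Set E} (hs : IsVonNBounded ℝ s) : IsVonNBounded ℝ (convexHull ℝ s) := by
  intro V hV
  obtain ⟨W, ⟨hW, hWconv⟩, hWV⟩ := (LocallyConvexSpace.convex_basis_zero ℝ E).mem_iff.mp hV
  refine Absorbs.mono_left ?_ hWV
  filter_upwards [(hs hW).eventually] with c hc
  exact convexHull_min hc (hWconv.smul c)

theorem Bornology.IsVonNBounded.exists_smul_subset {s W : Set E} (hs : IsVonNBounded ℝ s)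
    (hW : W ∈ 𝓝 0) : ∃ t ∈ Ioc (0 : ℝ) 1, t • s ⊆ W := by
  have hsmall : ∀ᶠ t in 𝓝[>] (0 : ℝ), t • s ⊆ W :=
    nhdsWithin_le_nhds (tendsto_smallSets_iff.mp hs.tendsto_smallSets_nhds W hW)
  have hIoc : ∀ᶠ t in 𝓝[>] (0 : ℝ), t ∈ Ioc 0 1 := Ioc_mem_nhdsGT one_pos
  exact (hIoc.and hsmall).exists

end Bounded

section Density

variable {E F : Type*} [AddCommGroup E] [Module ℝ E] [TopologicalSpace E] [ContinuousAdd E]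
  [ContinuousConstSMul ℝ E] [AddCommGroup F] [Module ℝ F] [TopologicalSpace F]
  [IsTopologicalAddGroup F] [ContinuousSMul ℝ F]

theorem Convex.dense_of_dense_snd_of_dense_fst_of_isVonNBounded {C D : Set (E × F)}
    (hC : Convex ℝ C) (hDC : D ⊆ C) (hC₂ : Dense (Prod.snd '' C)) (hD₁ : Dense (Prod.fst '' D))
    (hD₂ : IsVonNBounded ℝ (Prod.snd '' D)) : Dense C := by
  rintro ⟨y₁, y₂⟩
  rw [mem_closure_iff_nhds, nhds_prod_eq]
  intro U hU
  obtain ⟨V₁, hV₁, V₂, hV₂, hV⟩ := mem_prod_iff.mp hU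
  obtain ⟨B, hB, hBB⟩ := exists_nhds_zero_half
    ((continuous_const_add y₂).tendsto' 0 y₂ (add_zero y₂) hV₂)
  obtain ⟨c, hcC, hc⟩ : ∃ c ∈ C, c.2 - y₂ ∈ B := by
    obtain ⟨_, hcB, c, hcC, rfl⟩ := mem_closure_iff_nhds.mp (hC₂ y₂) _
      ((continuous_sub_right y₂).tendsto' y₂ 0 (sub_self y₂) hB)
    exact ⟨c, hcC, hcB⟩
  obtain ⟨t, ⟨ht₀, ht₁⟩, htB⟩ := (hD₂.sub (isVonNBounded_singleton c.2)).exists_smul_subset hB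
  set φ : E → E := fun ζ => (1 - t) • c.1 + t • ζ
  have hφ : Dense (φ '' (Prod.fst '' D)) := by
    have hsurj : Function.Surjective φ := fun z => ⟨t⁻¹ • (z - (1 - t) • c.1), by
      simp [φ, smul_smul, ht₀.ne']⟩
    exact hsurj.denseRange.dense_image (continuous_const.add (continuous_const_smul t)) hD₁
  obtain ⟨_, hzV, _, ⟨d, hdD, rfl⟩, rfl⟩ := mem_closure_iff_nhds.mp (hφ y₁) V₁ hV₁
  refine ⟨(1 - t) • c + t • d, hV ⟨hzV, ?_⟩, hC hcC (hDC hdD) (by linarith) ht₀.le (by ring)⟩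
  have hsnd : ((1 - t) • c + t • d).2 = y₂ + ((c.2 - y₂) + t • (d.2 - c.2)) := by
    simp only [Prod.snd_add, Prod.smul_snd]
    module
  rw [hsnd]
  exact hBB _ hc _ (htB (smul_mem_smul_set (sub_mem_sub (mem_image_of_mem _ hdD) rfl)))

end Density

section ProdMap

variable {R E F : Type*} [Semiring R] [AddCommMonoid E] [Module R E] [TopologicalSpace E]
  [AddCommMonoid F] [Module R F] [TopologicalSpace F]

theorem ContinuousLinearMap.prodMap_pow (A : E →L[R] E) (B : F →L[R] F) (n : ℕ) :
    A.prodMap B ^ n = (A ^ n).prodMap (B ^ n) :=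
  ContinuousLinearMap.ext fun x => by simp [FunLike.coe_pow_eq_iterate, Prod.map_iterate]

variable [Module ℝ E] [Module ℝ F]

theorem ContinuousLinearMap.fst_image_convexHull_orbit_prodMap (A : E →L[R] E) (B : F →L[R] F)
    (x : E) (y : F) :
    Prod.fst '' convexHull ℝ (range fun n : ℕ => (A.prodMap B ^ n) (x, y)) =
      convexHull ℝ (range fun n : ℕ => (A ^ n) x) := by
  rw [← LinearMap.coe_fst (R := ℝ), LinearMap.image_convexHull, ← range_comp]
  simp [Function.comp_def, prodMap_pow]

theorem ContinuousLinearMap.snd_image_convexHull_orbit_prodMap (A : E →L[R] E) (B : F →L[R] F)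
    (x : E) (y : F) :
    Prod.snd '' convexHull ℝ (range fun n : ℕ => (A.prodMap B ^ n) (x, y)) =
      convexHull ℝ (range fun n : ℕ => (B ^ n) y) := by
  rw [← LinearMap.coe_snd (R := ℝ), LinearMap.image_convexHull, ← range_comp]
  simp [Function.comp_def, prodMap_pow]

end ProdMap

theorem ContinuousLinearMap.aeval_prodMap {𝕜 E F : Type*} [CommSemiring 𝕜] [AddCommGroup E]
    [Module 𝕜 E] [TopologicalSpace E] [IsTopologicalAddGroup E] [ContinuousConstSMul 𝕜 E]
    [AddCommGroup F] [Module 𝕜 F] [TopologicalSpace F] [IsTopologicalAddGroup F]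
    [ContinuousConstSMul 𝕜 F] (A : E →L[𝕜] E) (B : F →L[𝕜] F) (p : 𝕜[X]) :
    aeval (A.prodMap B) p = (aeval A p).prodMap (aeval B p) := by
  refine ContinuousLinearMap.ext fun x => Prod.ext ?_ ?_ <;>
    simp [aeval_eq_sum_range, prodMap_pow, Prod.fst_sum, Prod.snd_sum]

section Orbit

variable {𝕜 X : Type*} [RCLike 𝕜] [AddCommGroup X] [Module 𝕜 X] [Module ℝ X]
  [IsScalarTower ℝ 𝕜 X] [TopologicalSpace X]

theorem ContinuousLinearMap.mapsTo_convexHull_orbit (T : X →L[𝕜] X) (x : X) :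
    MapsTo T (convexHull ℝ (range fun n : ℕ => (T ^ n) x))
      (convexHull ℝ (range fun n : ℕ => (T ^ n) x)) := by
  have hT : IsLinearMap ℝ T := ⟨map_add T, T.map_smul_of_tower⟩
  refine convexHull_min ?_ ((convex_convexHull ℝ _).is_linear_preimage hT)
  rintro _ ⟨n, rfl⟩
  refine subset_convexHull ℝ _ ⟨n + 1, ?_⟩
  simp only [FunLike.coe_pow_eq_iterate, Function.iterate_succ_apply']

variable [IsTopologicalAddGroup X] [ContinuousConstSMul 𝕜 X]

theorem IsConvexPolyK.mapsTo_aeval {p : 𝕜[X]} (hp : IsConvexPolyK p) {T : X →L[𝕜] X}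
    {C : Set X} (hC : Convex ℝ C) (hT : MapsTo T C C) : MapsTo (aeval T p) C C := by
  obtain ⟨n, a, ha₀, ha₁, rfl⟩ := hp
  intro x hx
  have hpow : ∀ k : ℕ, (T ^ k) x ∈ C := fun k => by
    rw [FunLike.coe_pow_eq_iterate]
    exact hT.iterate k hx
  simpa [← algebraMap_smul 𝕜] using hC.sum_mem (fun k _ => ha₀ k) ha₁ fun k _ => hpow k

theorem IsConvexPolyK.convexHull_orbit_aeval_subset {p : 𝕜[X]} (hp : IsConvexPolyK p)
    (T : X →L[𝕜] X) (x : X) :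
    convexHull ℝ (range fun n : ℕ => (aeval T p ^ n) x) ⊆
      convexHull ℝ (range fun n : ℕ => (T ^ n) x) := by
  refine convexHull_min ?_ (convex_convexHull ℝ _)
  rintro _ ⟨n, rfl⟩
  have hx : x ∈ convexHull ℝ (range fun n : ℕ => (T ^ n) x) :=
    subset_convexHull ℝ _ ⟨0, by simp⟩
  dsimp only
  rw [FunLike.coe_pow_eq_iterate]
  exact ((hp.mapsTo_aeval (convex_convexHull ℝ _) (T.mapsTo_convexHull_orbit x)).iterate n) hx

end Orbit

theorem prodMap_convexCyclic_general
    {𝕜 X₁ X₂ : Type*} [RCLike 𝕜]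
    [AddCommGroup X₁] [Module 𝕜 X₁] [Module ℝ X₁] [IsScalarTower ℝ 𝕜 X₁]
    [TopologicalSpace X₁] [IsTopologicalAddGroup X₁] [ContinuousSMul 𝕜 X₁]
    [AddCommGroup X₂] [Module 𝕜 X₂] [Module ℝ X₂] [IsScalarTower ℝ 𝕜 X₂]
    [TopologicalSpace X₂] [IsTopologicalAddGroup X₂] [ContinuousSMul 𝕜 X₂]
    [LocallyConvexSpace ℝ X₂]
    (T₁ : X₁ →L[𝕜] X₁) (T₂ : X₂ →L[𝕜] X₂)
    (hT₂ : ∃ x : X₂, Dense (convexHull ℝ (Set.range fun n : ℕ => (T₂ ^ n) x)))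
    (p₀ : Polynomial 𝕜) (hp₀ : IsConvexPolyK p₀)
    (hp₀T₁ : ∃ x : X₁,
      Dense (convexHull ℝ (Set.range fun n : ℕ => ((Polynomial.aeval T₁ p₀) ^ n) x)))
    (hp₀T₂ : ∀ x : X₂,
      Bornology.IsVonNBounded 𝕜 (Set.range fun n : ℕ => ((Polynomial.aeval T₂ p₀) ^ n) x)) :
    (∃ u : X₁ × X₂,
        Dense (convexHull ℝ (Set.range fun n : ℕ => ((T₁.prodMap T₂) ^ n) u))) ∧
    ∀ (u₁ : X₁) (u₂ : X₂),
      Dense (convexHull ℝ (Set.range fun n : ℕ => ((Polynomial.aeval T₁ p₀) ^ n) u₁)) →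
      Dense (convexHull ℝ (Set.range fun n : ℕ => (T₂ ^ n) u₂)) →
      Dense (convexHull ℝ (Set.range fun n : ℕ => ((T₁.prodMap T₂) ^ n) (u₁, u₂))) := by
  have := IsScalarTower.continuousSMul (M := ℝ) (α := X₁) 𝕜
  have := IsScalarTower.continuousSMul (M := ℝ) (α := X₂) 𝕜
  have hcyclic : ∀ (u₁ : X₁) (u₂ : X₂),
      Dense (convexHull ℝ (Set.range fun n : ℕ => ((Polynomial.aeval T₁ p₀) ^ n) u₁)) →
      Dense (convexHull ℝ (Set.range fun n : ℕ => (T₂ ^ n) u₂)) →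
      Dense (convexHull ℝ (Set.range fun n : ℕ => ((T₁.prodMap T₂) ^ n) (u₁, u₂))) := by
    intro u₁ u₂ h₁ h₂
    refine (convex_convexHull ℝ _).dense_of_dense_snd_of_dense_fst_of_isVonNBounded
      (hp₀.convexHull_orbit_aeval_subset _ _) ?_ ?_ ?_
    · rwa [ContinuousLinearMap.snd_image_convexHull_orbit_prodMap]
    · rwa [ContinuousLinearMap.aeval_prodMap, ContinuousLinearMap.fst_image_convexHull_orbit_prodMap]
    · rw [ContinuousLinearMap.aeval_prodMap, ContinuousLinearMap.snd_image_convexHull_orbit_prodMap]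
      exact ((hp₀T₂ u₂).restrict_scalars ℝ).convexHull
  obtain ⟨u₁, h₁⟩ := hp₀T₁
  obtain ⟨u₂, h₂⟩ := hT₂
  exact ⟨⟨(u₁, u₂), hcyclic u₁ u₂ h₁ h₂⟩, hcyclic⟩

/-- Direct sums of convex-cyclic operators. -/
theorem prodMap_convexCyclic
    {𝕜 X₁ X₂ : Type*} [RCLike 𝕜]
    [AddCommGroup X₁] [Module 𝕜 X₁] [Module ℝ X₁] [IsScalarTower ℝ 𝕜 X₁]
    [TopologicalSpace X₁] [IsTopologicalAddGroup X₁] [ContinuousSMul 𝕜 X₁]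
    [LocallyConvexSpace ℝ X₁]
    [AddCommGroup X₂] [Module 𝕜 X₂] [Module ℝ X₂] [IsScalarTower ℝ 𝕜 X₂]
    [TopologicalSpace X₂] [IsTopologicalAddGroup X₂] [ContinuousSMul 𝕜 X₂]
    [LocallyConvexSpace ℝ X₂]
    (T₁ : X₁ →L[𝕜] X₁) (T₂ : X₂ →L[𝕜] X₂)
    (hT₁ : ∃ x : X₁, Dense (convexHull ℝ (Set.range fun n : ℕ => (T₁ ^ n) x)))
    (hT₂ : ∃ x : X₂, Dense (convexHull ℝ (Set.range fun n : ℕ => (T₂ ^ n) x)))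
    (p₀ : Polynomial 𝕜) (hp₀ : IsConvexPolyK p₀)
    (hp₀T₁ : ∃ x : X₁,
      Dense (convexHull ℝ (Set.range fun n : ℕ => ((Polynomial.aeval T₁ p₀) ^ n) x)))
    (hp₀T₂ : ∀ x : X₂,
      Bornology.IsVonNBounded 𝕜 (Set.range fun n : ℕ => ((Polynomial.aeval T₂ p₀) ^ n) x)) :
    (∃ u : X₁ × X₂,
        Dense (convexHull ℝ (Set.range fun n : ℕ => ((T₁.prodMap T₂) ^ n) u))) ∧
    ∀ (u₁ : X₁) (u₂ : X₂),
      Dense (convexHull ℝ (Set.range fun n : ℕ => ((Polynomial.aeval T₁ p₀) ^ n) u₁)) →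
      Dense (convexHull ℝ (Set.range fun n : ℕ => (T₂ ^ n) u₂)) →
      Dense (convexHull ℝ (Set.range fun n : ℕ => ((T₁.prodMap T₂) ^ n) (u₁, u₂))) :=
  prodMap_convexCyclic_general T₁ T₂ hT₂ p₀ hp₀ hp₀T₁ hp₀T₂
end

section
/- Let S = {z₁, ..., z_N} be distinct complex numbers with R = max|z_k| > 1, such that z_j ≠ conj(z_k) whenever |z_j| = |z_k| = R and j ≠ k. Then for all α ∈ (0,1) except possibly one value, there exists K > 0 such that for all m ≥ K the convex-polynomial p_{m,α}(z) = zᵐ(αz + 1 − α) peaks on S at a point z_{k₀} with |z_{k₀}| = R; that is, |p_{m,α}(z_{k₀})| > |p_{m,α}(z)| for all z ∈ S with z ≠ z_{k₀}, and max_{z ∈ S} |p_{m,α}(z)| = Rᵐ · max{|α z_k + (1−α)| : |z_k| = R}. -/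
/-!
Among the points of `S` on the circle `|z| = R`, take the one `z₀` of largest real part; no
other point ties with it, since a tie would be `z₀` itself or its conjugate. For `0 < α < 1`,
`|α z + 1 - α|² = α² R² + (1 - α)² + 2 α (1 - α) Re z` on that circle, so the factor
`α z + 1 - α` peaks strictly at `z₀`, and is nonzero there unless `α = 1 / (1 + R)`. Points of
modulus `< R` lose to `z₀` once `m` is large, because `(|z| / R)ᵐ → 0`.
-/

open Filter ComplexConjugate

theorem eventually_pow_mul_lt_pow_mul {r s a b : ℝ} (hr : 0 ≤ r) (hrs : r < s) (hb : 0 < b) :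
    ∀ᶠ m in atTop, r ^ m * a < s ^ m * b := by
  have hs : 0 < s := hr.trans_lt hrs
  have hlim : Tendsto (fun m : ℕ => (r / s) ^ m * a) atTop (nhds 0) := by
    simpa using (tendsto_pow_atTop_nhds_zero_of_lt_one (div_nonneg hr hs.le)
      ((div_lt_one hs).2 hrs)).mul_const a
  filter_upwards [hlim.eventually_lt_const hb] with m hm
  calc r ^ m * a = s ^ m * ((r / s) ^ m * a) := by
        rw [div_pow]; field_simp
    _ < s ^ m * b := mul_lt_mul_of_pos_left hm (pow_pos hs m)

theorem eventually_forall_norm_pow_mul_lt {𝕜 : Type*} [NormedDivisionRing 𝕜] {S : Finset 𝕜}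
    {g : 𝕜 → 𝕜} {z₀ : 𝕜} (hmax : ∀ z ∈ S, ‖z‖ ≤ ‖z₀‖) (hg : g z₀ ≠ 0)
    (hpeak : ∀ z ∈ S, ‖z‖ = ‖z₀‖ → z ≠ z₀ → ‖g z‖ < ‖g z₀‖) :
    ∀ᶠ m in atTop, ∀ z ∈ S, z ≠ z₀ → ‖z ^ m * g z‖ < ‖z₀ ^ m * g z₀‖ := by
  rw [eventually_all_finset]
  intro z hz
  simp only [norm_mul, norm_pow]
  rcases (hmax z hz).lt_or_eq with hlt | heq
  · filter_upwards [eventually_pow_mul_lt_pow_mul (norm_nonneg z) hlt (norm_pos_iff.2 hg)]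
      with m hm _ using hm
  · refine Eventually.of_forall fun m hne => ?_
    have hz₀ : z₀ ≠ 0 := by
      rintro rfl
      exact hne (norm_eq_zero.1 (heq.trans norm_zero))
    rw [heq]
    exact mul_lt_mul_of_pos_left (hpeak z hz heq hne) (pow_pos (norm_pos_iff.2 hz₀) m)

namespace Complex

theorem eq_or_eq_conj_of_norm_eq_of_re_eq {z w : ℂ} (hn : ‖z‖ = ‖w‖) (hre : z.re = w.re) :
    z = w ∨ z = conj w := by
  have him : z.im ^ 2 = w.im ^ 2 := by
    have h := congrArg (· ^ 2) hn
    simp only [Complex.sq_norm, normSq_apply, hre] at h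
    linear_combination h
  rcases sq_eq_sq_iff_eq_or_eq_neg.1 him with h | h
  · exact Or.inl (ext hre h)
  · exact Or.inr (ext (by simpa using hre) (by simpa using h))

theorem exists_mem_norm_eq_forall_re_lt {S : Finset ℂ} {R : ℝ} (hne : ∃ z ∈ S, ‖z‖ = R)
    (hconj : ∀ z ∈ S, ∀ w ∈ S, ‖z‖ = R → ‖w‖ = R → z ≠ w → z ≠ conj w) :
    ∃ z₀ ∈ S, ‖z₀‖ = R ∧ ∀ z ∈ S, ‖z‖ = R → z ≠ z₀ → z.re < z₀.re := by
  classical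
  obtain ⟨z₀, hz₀, hmax⟩ := (S.filter (‖·‖ = R)).exists_max_image re <| by
    obtain ⟨z, hz, hzR⟩ := hne
    exact ⟨z, Finset.mem_filter.2 ⟨hz, hzR⟩⟩
  obtain ⟨hz₀S, hz₀R⟩ := Finset.mem_filter.1 hz₀
  refine ⟨z₀, hz₀S, hz₀R, fun z hz hzR hne => ?_⟩
  refine (hmax z (Finset.mem_filter.2 ⟨hz, hzR⟩)).lt_of_ne fun hre => ?_
  rcases eq_or_eq_conj_of_norm_eq_of_re_eq (hzR.trans hz₀R.symm) hre with h | h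
  exacts [hne h, hconj z hz z₀ hz₀S hzR hz₀R hne h]

theorem norm_ofReal_mul_add_ofReal_sq (a b : ℝ) (z : ℂ) :
    ‖(a : ℂ) * z + b‖ ^ 2 = a ^ 2 * ‖z‖ ^ 2 + b ^ 2 + 2 * a * b * z.re := by
  simp only [Complex.sq_norm, normSq_apply, add_re, add_im, mul_re, mul_im, ofReal_re, ofReal_im]
  ring

theorem norm_ofReal_mul_add_ofReal_lt {a b : ℝ} {z w : ℂ} (hab : 0 < a * b) (hn : ‖z‖ = ‖w‖)
    (hre : z.re < w.re) : ‖(a : ℂ) * z + b‖ < ‖(a : ℂ) * w + b‖ := by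
  refine lt_of_pow_lt_pow_left₀ 2 (norm_nonneg _) ?_
  rw [norm_ofReal_mul_add_ofReal_sq, norm_ofReal_mul_add_ofReal_sq, hn]
  nlinarith

theorem ofReal_mul_add_one_sub_ne_zero {α : ℝ} {z : ℂ} (hα₀ : 0 ≤ α) (hα₁ : α ≤ 1) (h : α ≠ (1 + ‖z‖)⁻¹) :
    (α : ℂ) * z + (1 - α) ≠ 0 := by
  intro h0
  have hnorm : α * ‖z‖ = 1 - α := by
    have := congrArg norm (eq_neg_of_add_eq_zero_left h0)
    rwa [norm_mul, norm_neg, norm_real, Real.norm_of_nonneg hα₀,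
      ← ofReal_one, ← ofReal_sub, norm_real, Real.norm_of_nonneg (sub_nonneg.2 hα₁)] at this
  apply h
  field_simp
  linarith

end Complex

theorem peaking_convexPolynomials_general
    (S : Finset ℂ) (R : ℝ)
    (hR : IsGreatest ((fun z => ‖z‖) '' (S : Set ℂ)) R)
    (hconj : ∀ z ∈ S, ∀ w ∈ S, ‖z‖ = R → ‖w‖ = R → z ≠ w →
      z ≠ starRingEnd ℂ w) :
    ∃ α₀ : ℝ, ∀ α ∈ Set.Ioo (0 : ℝ) 1, α ≠ α₀ →
      ∃ K : ℕ, ∀ m : ℕ, K ≤ m →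
        ∃ z₀ ∈ S, ‖z₀‖ = R ∧
          (∀ z ∈ S, z ≠ z₀ →
            ‖z ^ m * ((α : ℂ) * z + (1 - (α : ℂ)))‖ <
              ‖z₀ ^ m * ((α : ℂ) * z₀ + (1 - (α : ℂ)))‖) ∧
          ∃ cα : ℝ,
            IsGreatest ((fun z => ‖(α : ℂ) * z + (1 - (α : ℂ))‖) ''
              {z : ℂ | z ∈ S ∧ ‖z‖ = R}) cα ∧
            ‖z₀ ^ m * ((α : ℂ) * z₀ + (1 - (α : ℂ)))‖ = R ^ m * cα := by
  obtain ⟨z₀, hz₀S, hz₀R, hre⟩ := Complex.exists_mem_norm_eq_forall_re_lt hR.1 hconj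
  refine ⟨(1 + R)⁻¹, fun α ⟨hα0, hα1⟩ hα₀ => ?_⟩
  set g : ℂ → ℂ := fun z => (α : ℂ) * z + (1 - α)
  have hpeak : ∀ z ∈ S, ‖z‖ = R → z ≠ z₀ → ‖g z‖ < ‖g z₀‖ := fun z hz hzR hne => by
    simpa only [g, ← Complex.ofReal_one, ← Complex.ofReal_sub] using
      Complex.norm_ofReal_mul_add_ofReal_lt (mul_pos hα0 (sub_pos.2 hα1))
        (hzR.trans hz₀R.symm) (hre z hz hzR hne)
  have hg₀ : g z₀ ≠ 0 :=
    Complex.ofReal_mul_add_one_sub_ne_zero hα0.le hα1.le (by rwa [hz₀R])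
  obtain ⟨K, hK⟩ := eventually_atTop.1 <| eventually_forall_norm_pow_mul_lt
    (fun z hz => hz₀R ▸ hR.2 ⟨z, hz, rfl⟩) hg₀ (fun z hz hzR => hpeak z hz (hzR.trans hz₀R))
  refine ⟨K, fun m hm => ⟨z₀, hz₀S, hz₀R, hK m hm, ‖g z₀‖, ⟨⟨z₀, ⟨hz₀S, hz₀R⟩, rfl⟩, ?_⟩,
    by rw [norm_mul, norm_pow, hz₀R]⟩⟩
  rintro _ ⟨z, ⟨hz, hzR⟩, rfl⟩
  rcases eq_or_ne z z₀ with rfl | hne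
  exacts [le_rfl, (hpeak z hz hzR hne).le]

/-- Peaking convex-polynomials `p_{m,α}(z) = zᵐ (α z + 1 - α)`. -/
theorem peaking_convexPolynomials
    (S : Finset ℂ) (hS : S.Nonempty) (R : ℝ)
    (hR : IsGreatest ((fun z => ‖z‖) '' (S : Set ℂ)) R) (hR1 : 1 < R)
    (hconj : ∀ z ∈ S, ∀ w ∈ S, ‖z‖ = R → ‖w‖ = R → z ≠ w →
      z ≠ starRingEnd ℂ w) :
    ∃ α₀ : ℝ, ∀ α ∈ Set.Ioo (0 : ℝ) 1, α ≠ α₀ →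
      ∃ K : ℕ, ∀ m : ℕ, K ≤ m →
        ∃ z₀ ∈ S, ‖z₀‖ = R ∧
          (∀ z ∈ S, z ≠ z₀ →
            ‖z ^ m * ((α : ℂ) * z + (1 - (α : ℂ)))‖ <
              ‖z₀ ^ m * ((α : ℂ) * z₀ + (1 - (α : ℂ)))‖) ∧
          ∃ cα : ℝ,
            IsGreatest ((fun z => ‖(α : ℂ) * z + (1 - (α : ℂ))‖) ''
              {z : ℂ | z ∈ S ∧ ‖z‖ = R}) cα ∧
            ‖z₀ ^ m * ((α : ℂ) * z₀ + (1 - (α : ℂ)))‖ = R ^ m * cα :=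
  peaking_convexPolynomials_general S R hR hconj
end

section
/- Let {M_n} be a sequence of real numbers with M_n → +∞, {ε_n} a sequence of complex numbers with |ε_n| → 0, and w a nonzero complex number. If θ ∈ ℝ is not an integer multiple of π, then there exists a strictly increasing sequence of positive integers {n_k} such that M_{n_k} · Re(ε_{n_k} + e^{i n_k θ} w) → +∞. -/
/-!
Put `z = e^{iθ}` and `a_n = Re(z^n w)`. Since `z ≠ 1` and `z² ≠ 1` (this is where `θ ∉ πℤ` enters),
the geometric sums `∑ z^n` and `∑ z^{2n}` over any window `[N, N + K)` are bounded independently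
of `N` and `K`. Hence on long windows `a_n` has mean about `0` while `a_n² = (Re(z^{2n} w²) + |w|²)/2`
has mean about `|w|²/2`. If `a_n < |w|/8` for all large `n`, the pointwise bound
`a_n² + |w| a_n ≤ |w|²/4` contradicts this on a long window. So `a_n ≥ |w|/8` infinitely often,
which survives the perturbation by `ε_n → 0` and is then amplified by `M_n → ∞`.
-/

open Filter Finset

lemma norm_sum_range_pow_add_le {𝕜 : Type*} [NormedDivisionRing 𝕜] {z : 𝕜} (hz : ‖z‖ ≤ 1)
    (hz1 : z ≠ 1) (N K : ℕ) : ‖∑ j ∈ range K, z ^ (N + j)‖ ≤ 2 / ‖z - 1‖ := by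
  have hsum : ∑ j ∈ range K, z ^ (N + j) = z ^ N * ((z ^ K - 1) / (z - 1)) := by
    simp_rw [pow_add, ← mul_sum, geom_sum_eq hz1]
  have hnum : ‖z ^ K - 1‖ ≤ 2 :=
    calc ‖z ^ K - 1‖ ≤ ‖z ^ K‖ + ‖(1 : 𝕜)‖ := norm_sub_le _ _
      _ ≤ 1 + 1 := by rw [norm_one, norm_pow]; gcongr; exact pow_le_one₀ (norm_nonneg z) hz
      _ = 2 := one_add_one_eq_two
  rw [hsum, norm_mul, norm_div, norm_pow]
  calc ‖z‖ ^ N * (‖z ^ K - 1‖ / ‖z - 1‖) ≤ 1 * (2 / ‖z - 1‖) := by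
        gcongr
        exact pow_le_one₀ (norm_nonneg z) hz
    _ = 2 / ‖z - 1‖ := one_mul _

lemma Filter.Tendsto.atTop_mul_of_eventually_le {α 𝕜 : Type*} [Field 𝕜] [LinearOrder 𝕜]
    [IsStrictOrderedRing 𝕜] {l : Filter α} {f g : α → 𝕜} {c : 𝕜} (hc : 0 < c)
    (hf : Tendsto f l atTop) (hg : ∀ᶠ x in l, c ≤ g x) :
    Tendsto (fun x => f x * g x) l atTop := by
  refine tendsto_atTop_mono' l ?_ (hf.atTop_mul_const hc)
  filter_upwards [hf.eventually_ge_atTop 0, hg] with x hfx hgx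
  exact mul_le_mul_of_nonneg_left hgx hfx

lemma sq_add_mul_le_of_abs_le {a b c : ℝ} (hab : |a| ≤ b) (hac : a ≤ c) (hc : 0 ≤ c) :
    a ^ 2 + b * a ≤ 2 * c * b := by
  have hsq : a ^ 2 ≤ b * |a| := by
    rw [← sq_abs, sq]; exact mul_le_mul_of_nonneg_right hab (abs_nonneg a)
  have hsum : |a| + a ≤ 2 * c := by cases abs_cases a <;> linarith
  nlinarith [(abs_nonneg a).trans hab]

namespace Complex

lemma norm_pow_mul_of_norm_eq_one {z : ℂ} (hz : ‖z‖ = 1) (n : ℕ) (w : ℂ) :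
    ‖z ^ n * w‖ = ‖w‖ := by
  rw [norm_mul, norm_pow, hz, one_pow, one_mul]

lemma re_sq_eq (a : ℂ) : a.re ^ 2 = ((a ^ 2).re + ‖a‖ ^ 2) / 2 := by
  rw [Complex.sq_norm, normSq_apply, sq, sq, mul_re]
  ring

lemma abs_sum_re_pow_mul_le {z : ℂ} (hz : ‖z‖ ≤ 1) (hz1 : z ≠ 1) (w : ℂ) (N K : ℕ) :
    |∑ j ∈ range K, (z ^ (N + j) * w).re| ≤ 2 / ‖z - 1‖ * ‖w‖ := by
  rw [← re_sum, ← sum_mul]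
  refine (abs_re_le_norm _).trans ?_
  rw [norm_mul]
  gcongr
  exact norm_sum_range_pow_add_le hz hz1 N K

lemma sum_sq_re_pow_mul {z : ℂ} (hz : ‖z‖ = 1) (w : ℂ) (N K : ℕ) :
    ∑ j ∈ range K, (z ^ (N + j) * w).re ^ 2
      = (∑ j ∈ range K, ((z ^ 2) ^ (N + j) * w ^ 2).re + K * ‖w‖ ^ 2) / 2 := by
  have hterm (j : ℕ) :
      (z ^ (N + j) * w).re ^ 2 = (((z ^ 2) ^ (N + j) * w ^ 2).re + ‖w‖ ^ 2) / 2 := by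
    rw [re_sq_eq, norm_pow_mul_of_norm_eq_one hz, mul_pow, ← pow_mul, ← pow_mul']
  simp only [hterm, ← sum_div, sum_add_distrib, sum_const, card_range, nsmul_eq_mul]

theorem frequently_norm_div_eight_le_re_pow_mul {z : ℂ} (hz : ‖z‖ = 1) (hz2 : z ^ 2 ≠ 1)
    {w : ℂ} (hw : w ≠ 0) : ∃ᶠ n in atTop, ‖w‖ / 8 ≤ (z ^ n * w).re := by
  intro hsmall
  obtain ⟨N, hN⟩ := eventually_atTop.1 hsmall
  have hz1 : z ≠ 1 := by rintro rfl; exact hz2 (one_pow 2)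
  have hW : 0 < ‖w‖ := norm_pos_iff.2 hw
  set B := 2 / ‖z ^ 2 - 1‖ * ‖w‖ ^ 2 / 2 + ‖w‖ * (2 / ‖z - 1‖ * ‖w‖) with hB
  have hbound (K : ℕ) : K * (‖w‖ ^ 2 / 4) ≤ B := by
    have hlin := abs_le.1 (abs_sum_re_pow_mul_le hz.le hz1 w N K)
    have hquad := abs_le.1 (abs_sum_re_pow_mul_le (z := z ^ 2) (by simp [hz]) hz2 (w ^ 2) N K)
    have hpoint : ∑ j ∈ range K, ((z ^ (N + j) * w).re ^ 2 + ‖w‖ * (z ^ (N + j) * w).re)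
        ≤ ∑ _j ∈ range K, 2 * (‖w‖ / 8) * ‖w‖ := by
      refine sum_le_sum fun j _ => sq_add_mul_le_of_abs_le ?_ ?_ (by positivity)
      · exact (abs_re_le_norm _).trans_eq (norm_pow_mul_of_norm_eq_one hz _ w)
      · exact (not_le.1 (hN (N + j) (Nat.le_add_right N j))).le
    rw [sum_add_distrib, ← mul_sum, sum_sq_re_pow_mul hz, sum_const, card_range,
      nsmul_eq_mul] at hpoint
    rw [norm_pow] at hquad
    linarith [hB, hquad.1, mul_le_mul_of_nonneg_left hlin.1 hW.le]
  obtain ⟨K, hK⟩ := exists_nat_gt (B / (‖w‖ ^ 2 / 4))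
  rw [div_lt_iff₀ (by positivity)] at hK
  exact (hbound K).not_gt hK

lemma exp_ofReal_mul_I_sq_ne_one {θ : ℝ} (hθ : ∀ m : ℤ, θ ≠ m * Real.pi) :
    exp (θ * I) ^ 2 ≠ 1 := by
  rw [← exp_nat_mul]
  intro h
  obtain ⟨m, hm⟩ := exp_eq_one_iff.1 h
  have him : 2 * θ = m * (2 * Real.pi) := by simpa using congrArg im hm
  exact hθ m (by linarith)

end Complex

/-- A one-variable growth lemma. -/
theorem one_variable_growth
    (M : ℕ → ℝ) (hM : Tendsto M atTop atTop)
    (ε : ℕ → ℂ) (hε : Tendsto (fun n => ‖ε n‖) atTop (nhds 0))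
    (w : ℂ) (hw : w ≠ 0)
    (θ : ℝ) (hθ : ∀ m : ℤ, θ ≠ m * Real.pi) :
    ∃ n : ℕ → ℕ, StrictMono n ∧ (∀ k, 0 < n k) ∧
      Tendsto (fun k =>
          M (n k) * (ε (n k) + Complex.exp ((n k : ℂ) * (θ : ℂ) * Complex.I) * w).re)
        atTop atTop := by
  set z := Complex.exp (θ * Complex.I)
  have hpow (n : ℕ) : Complex.exp (n * θ * Complex.I) = z ^ n := by
    rw [← Complex.exp_nat_mul, mul_assoc]
  have hc : 0 < ‖w‖ / 8 := by have := norm_pos_iff.2 hw; positivity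
  have hfreq : ∃ᶠ n in atTop, 0 < n ∧ ‖w‖ / 16 ≤ (ε n + z ^ n * w).re := by
    refine ((Complex.frequently_norm_div_eight_le_re_pow_mul (Complex.norm_exp_ofReal_mul_I θ)
      (Complex.exp_ofReal_mul_I_sq_ne_one hθ) hw).and_eventually
      ((hε.eventually (gt_mem_nhds (half_pos hc))).and (eventually_gt_atTop 0))).mono ?_
    rintro n ⟨hzw, hεn, hn⟩
    refine ⟨hn, ?_⟩
    rw [Complex.add_re]
    linarith [neg_abs_le (ε n).re, Complex.abs_re_le_norm (ε n)]
  obtain ⟨φ, hφ, hφP⟩ := extraction_of_frequently_atTop hfreq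
  refine ⟨φ, hφ, fun k => (hφP k).1, ?_⟩
  simp_rw [hpow]
  exact (hM.comp hφ.tendsto_atTop).atTop_mul_of_eventually_le (by positivity)
    (Eventually.of_forall fun k => (hφP k).2)
end

section
/- Let f₁, ..., f_N be complex numbers, not all zero, r > 1 a real number, and θ₁, ..., θ_N real numbers satisfying θ_i ≢ ±θ_j (mod 2π) for i ≠ j, and θ_j ≢ 0 (mod π) for all j. Then sup_{n ≥ 1} rⁿ · Re(Σ_{k=1}^N e^{i n θ_k} f_k) = +∞. -/
/-!
Put `z_k = exp (i θ_k)` and `G n = Re (∑ f_k z_k ^ n)`. Averaging over `n < M`, every geometric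
sequence `w ^ n` with `‖w‖ = 1`, `w ≠ 1` has Cesàro mean tending to `0`. Since no `z_k` is `1`, the
mean of `G` tends to `0`; writing `G² = (Re (P²) + |P|²) / 2` with `P n = ∑ f_k z_k ^ n`, the
hypotheses `z_j z_k ≠ 1` and `z_j z̄_k ≠ 1` (`j ≠ k`) kill every cross term, so the mean of `G²`
tends to `(∑ |f_k|²) / 2 > 0`. A bounded sequence with mean `0` and positive mean square is `≥ δ`
for infinitely many `n`, for some `δ > 0`, and `r ^ n δ → ∞`.
-/

open Filter Finset Topology Complex ComplexConjugate

noncomputable def cesaroMean {𝕜 : Type*} [DivisionRing 𝕜] (u : ℕ → 𝕜) (M : ℕ) : 𝕜 :=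
  (∑ n ∈ range M, u n) / M

lemma cesaroMean_add {𝕜 : Type*} [Field 𝕜] (u v : ℕ → 𝕜) :
    cesaroMean (fun n => u n + v n) = fun M => cesaroMean u M + cesaroMean v M :=
  funext fun M => by simp only [cesaroMean, sum_add_distrib, add_div]

lemma cesaroMean_const_mul {𝕜 : Type*} [Field 𝕜] (a : 𝕜) (u : ℕ → 𝕜) :
    cesaroMean (fun n => a * u n) = fun M => a * cesaroMean u M :=
  funext fun M => by simp only [cesaroMean, ← mul_sum, mul_div_assoc]

lemma cesaroMean_sum {ι 𝕜 : Type*} [Field 𝕜] (s : Finset ι) (u : ι → ℕ → 𝕜) :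
    cesaroMean (fun n => ∑ i ∈ s, u i n) = fun M => ∑ i ∈ s, cesaroMean (u i) M :=
  funext fun M => by simp only [cesaroMean, sum_comm (s := range M), sum_div]

lemma tendsto_cesaroMean_re {u : ℕ → ℂ} {l : ℂ} (h : Tendsto (cesaroMean u) atTop (𝓝 l)) :
    Tendsto (cesaroMean fun n => (u n).re) atTop (𝓝 l.re) := by
  have hre : (fun M => (cesaroMean u M).re) = cesaroMean fun n => (u n).re := by
    funext M
    simp [cesaroMean]
  exact hre ▸ (continuous_re.tendsto l).comp h

lemma tendsto_cesaroMean_pow {w : ℂ} (hw : ‖w‖ ≤ 1) :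
    Tendsto (cesaroMean (w ^ ·)) atTop (𝓝 (if w = 1 then 1 else 0)) := by
  split_ifs with h
  · subst h
    refine tendsto_const_nhds.congr' ?_
    filter_upwards [eventually_ne_atTop 0] with M hM
    simp [cesaroMean, hM]
  · refine squeeze_zero_norm (fun M => ?_) (tendsto_const_div_atTop_nhds_zero_nat (2 / ‖w - 1‖))
    have hwM : ‖w ^ M - 1‖ ≤ 2 := by
      calc ‖w ^ M - 1‖ ≤ ‖w‖ ^ M + 1 := by simpa using norm_sub_le (w ^ M) 1
        _ ≤ 2 := by linarith [pow_le_one₀ (norm_nonneg w) hw (n := M)]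
    rw [cesaroMean, geom_sum_eq h, norm_div, norm_div, norm_natCast]
    gcongr

lemma tendsto_cesaroMean_sum_mul_pow {ι : Type*} (s : Finset ι) (c w : ι → ℂ)
    (hw : ∀ i ∈ s, ‖w i‖ ≤ 1) :
    Tendsto (cesaroMean fun n => ∑ i ∈ s, c i * w i ^ n) atTop
      (𝓝 (∑ i ∈ s, if w i = 1 then c i else 0)) := by
  simp only [cesaroMean_sum, cesaroMean_const_mul]
  refine tendsto_finsetSum s fun i hi => ?_
  convert (tendsto_cesaroMean_pow (hw i hi)).const_mul (c i) using 2
  split_ifs <;> simp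

lemma le_of_tendsto_cesaroMean {d : ℕ → ℝ} {L a : ℝ} (h : Tendsto (cesaroMean d) atTop (𝓝 L))
    (hd : ∀ᶠ n in atTop, d n ≤ a) : L ≤ a := by
  obtain ⟨K, hK⟩ := eventually_atTop.1 hd
  set C := ∑ n ∈ range K, d n - K * a
  have hmean : ∀ᶠ M in atTop, cesaroMean d M ≤ a + C / M := by
    filter_upwards [eventually_ge_atTop K, eventually_gt_atTop 0] with M hKM hM
    have htail : ∑ n ∈ Ico K M, (d n - a) ≤ 0 :=
      sum_nonpos fun n hn => sub_nonpos.2 (hK n (mem_Ico.1 hn).1)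
    have hsum : ∑ n ∈ range M, d n ≤ M * a + C := by
      have := sum_range_add_sum_Ico (fun n => d n - a) hKM
      simp only [sum_sub_distrib, sum_const, card_range, nsmul_eq_mul] at this htail
      linarith
    rw [cesaroMean, div_le_iff₀ (by positivity), add_mul, div_mul_cancel₀ _ (by positivity)]
    linarith
  have hlim : Tendsto (fun M : ℕ => a + C / M) atTop (𝓝 a) := by
    simpa using (tendsto_const_div_atTop_nhds_zero_nat C).const_add a
  exact le_of_tendsto_of_tendsto h hlim hmean

lemma frequently_le_of_tendsto_cesaroMean {G : ℕ → ℝ} {B c : ℝ} (hB : ∀ n, |G n| ≤ B)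
    (h1 : Tendsto (cesaroMean G) atTop (𝓝 0))
    (h2 : Tendsto (cesaroMean (G · ^ 2)) atTop (𝓝 c)) (hc : 0 < c) :
    ∃ δ > 0, ∃ᶠ n in atTop, δ ≤ G n := by
  have hB0 : 0 ≤ B := (abs_nonneg _).trans (hB 0)
  set δ := c / (2 * B + 1)
  have hδ : 0 < δ := by positivity
  refine ⟨δ, hδ, fun hlt => ?_⟩
  -- `G² ≤ B |G|` and `|G| + G = 2 max G 0`, so `G² + B G ≤ 2 B δ` wherever `G < δ`.
  have hsmall : ∀ᶠ n in atTop, G n ^ 2 + B * G n ≤ 2 * B * δ := by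
    filter_upwards [hlt] with n hn
    have hGB := abs_le.1 (hB n)
    rcases le_total 0 (G n) with hG | hG
    · nlinarith
    · nlinarith [mul_nonneg (neg_nonneg.2 hG) (by linarith : 0 ≤ B + G n)]
  have hmean : Tendsto (cesaroMean fun n => G n ^ 2 + B * G n) atTop (𝓝 (c + B * 0)) := by
    rw [cesaroMean_add, cesaroMean_const_mul]
    exact h2.add (h1.const_mul B)
  have hcδ : c ≤ 2 * B * δ := by simpa using le_of_tendsto_cesaroMean hmean hsmall
  have : 2 * B * δ < c := by
    rw [show 2 * B * δ = c * (2 * B / (2 * B + 1)) by ring]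
    exact mul_lt_of_lt_one_right hc ((div_lt_one (by positivity)).2 (by linarith))
  linarith

section TrigonometricPolynomial

variable {ι : Type*} [Fintype ι] (c z : ι → ℂ)

lemma abs_re_sum_mul_pow_le (hz : ∀ k, ‖z k‖ ≤ 1) (n : ℕ) :
    |(∑ k, c k * z k ^ n).re| ≤ ∑ k, ‖c k‖ :=
  calc |(∑ k, c k * z k ^ n).re| ≤ ‖∑ k, c k * z k ^ n‖ := abs_re_le_norm _
    _ ≤ ∑ k, ‖c k * z k ^ n‖ := norm_sum_le _ _
    _ ≤ ∑ k, ‖c k‖ := sum_le_sum fun k _ => by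
        rw [norm_mul, norm_pow]
        exact mul_le_of_le_one_right (norm_nonneg _) (pow_le_one₀ (norm_nonneg _) (hz k))

lemma tendsto_cesaroMean_re_sum_mul_pow (hz : ∀ k, ‖z k‖ ≤ 1) (hz1 : ∀ k, z k ≠ 1) :
    Tendsto (cesaroMean fun n => (∑ k, c k * z k ^ n).re) atTop (𝓝 0) := by
  have h := tendsto_cesaroMean_sum_mul_pow univ c z fun k _ => hz k
  simp only [hz1, if_false, sum_const_zero] at h
  simpa using tendsto_cesaroMean_re h

lemma sum_mul_pow_mul_sum_mul_pow (a b x y : ι → ℂ) (n : ℕ) :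
    (∑ j, a j * x j ^ n) * (∑ k, b k * y k ^ n)
      = ∑ p ∈ univ ×ˢ univ, (a p.1 * b p.2) * (x p.1 * y p.2) ^ n := by
  rw [sum_mul_sum, sum_product]
  refine sum_congr rfl fun j _ => sum_congr rfl fun k _ => ?_
  ring

lemma tendsto_cesaroMean_re_sum_mul_pow_sq (hz : ∀ k, ‖z k‖ = 1)
    (hmul : ∀ j k, z j * z k ≠ 1) (hconj : ∀ j k, j ≠ k → z j * conj (z k) ≠ 1) :
    Tendsto (cesaroMean fun n => (∑ k, c k * z k ^ n).re ^ 2) atTop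
      (𝓝 ((∑ k, ‖c k‖ ^ 2) / 2)) := by
  classical
  set P : ℕ → ℂ := fun n => ∑ k, c k * z k ^ n
  have hsq : Tendsto (cesaroMean fun n => P n ^ 2) atTop (𝓝 0) := by
    simp only [P, sq, sum_mul_pow_mul_sum_mul_pow]
    have h := tendsto_cesaroMean_sum_mul_pow (univ ×ˢ univ) (fun p => c p.1 * c p.2)
      (fun p => z p.1 * z p.2) fun p _ => by simp [hz]
    simpa [hmul] using h
  have hnormSq : Tendsto (cesaroMean fun n => P n * conj (P n)) atTop
      (𝓝 (∑ k, ‖c k‖ ^ 2 : ℝ)) := by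
    simp only [P, map_sum, map_mul, map_pow, sum_mul_pow_mul_sum_mul_pow]
    have h := tendsto_cesaroMean_sum_mul_pow (univ ×ˢ univ) (fun p => c p.1 * conj (c p.2))
      (fun p => z p.1 * conj (z p.2)) fun p _ => by simp [hz]
    have hdiag : ∀ j k, z j * conj (z k) = 1 ↔ j = k := fun j k =>
      ⟨fun h => by_contra fun hjk => hconj j k hjk h, fun hjk => by rw [hjk, mul_conj', hz]; simp⟩
    convert h using 2
    simp [hdiag, Fintype.sum_prod_type, mul_conj']
  have hre : (fun n => (P n).re ^ 2) = fun n => 2⁻¹ * ((P n ^ 2).re + (P n * conj (P n)).re) := by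
    funext n
    rw [mul_conj, ofReal_re, normSq_apply, sq, sq, mul_re]
    ring
  rw [hre, cesaroMean_const_mul, div_eq_inv_mul]
  refine .const_mul _ ?_
  have hsum := hsq.add hnormSq
  rw [← cesaroMean_add, zero_add] at hsum
  simpa only [add_re, ofReal_re] using tendsto_cesaroMean_re hsum

theorem exists_pos_frequently_le_re_sum_mul_pow (hc : c ≠ 0) (hz : ∀ k, ‖z k‖ = 1)
    (hmul : ∀ j k, z j * z k ≠ 1) (hconj : ∀ j k, j ≠ k → z j * conj (z k) ≠ 1) :
    ∃ δ > 0, ∃ᶠ n in atTop, δ ≤ (∑ k, c k * z k ^ n).re := by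
  have hz1 : ∀ k, z k ≠ 1 := fun k hk => hmul k k (by rw [hk, one_mul])
  obtain ⟨k, hk⟩ := Function.ne_iff.1 hc
  have hS : 0 < ∑ k, ‖c k‖ ^ 2 :=
    sum_pos' (fun _ _ => by positivity) ⟨k, mem_univ k, pow_pos (norm_pos_iff.2 hk) 2⟩
  exact frequently_le_of_tendsto_cesaroMean (abs_re_sum_mul_pow_le c z fun k => (hz k).le)
    (tendsto_cesaroMean_re_sum_mul_pow c z (fun k => (hz k).le) hz1)
    (tendsto_cesaroMean_re_sum_mul_pow_sq c z hz hmul hconj) (half_pos hS)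

end TrigonometricPolynomial

lemma exp_ofReal_mul_I_mul_exp_ofReal_mul_I (a b : ℝ) :
    exp (a * I) * exp (b * I) = exp ((a + b : ℝ) * I) := by
  rw [← exp_add]
  push_cast
  ring_nf

lemma exp_ofReal_mul_I_mul_conj_exp_ofReal_mul_I (a b : ℝ) :
    exp (a * I) * conj (exp (b * I)) = exp ((a - b : ℝ) * I) := by
  rw [← exp_conj, ← exp_add, map_mul, conj_ofReal, conj_I]
  push_cast
  ring_nf

lemma exp_ofReal_mul_I_eq_one_iff (x : ℝ) : exp (x * I) = 1 ↔ ∃ m : ℤ, x = 2 * Real.pi * m := by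
  refine exp_eq_one_iff.trans (exists_congr fun m => ?_)
  rw [show (m : ℂ) * (2 * Real.pi * I) = ((2 * Real.pi * m : ℝ) : ℂ) * I by push_cast; ring]
  exact (mul_left_inj' I_ne_zero).trans ofReal_inj

/-- A multivariable growth lemma. -/
theorem multivariable_growth {N : ℕ} (f : Fin N → ℂ) (hf : f ≠ 0)
    (r : ℝ) (hr : 1 < r) (θ : Fin N → ℝ)
    (h₁ : ∀ i j, i ≠ j →
      (¬∃ m : ℤ, θ i - θ j = 2 * Real.pi * m) ∧ (¬∃ m : ℤ, θ i + θ j = 2 * Real.pi * m))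
    (h₂ : ∀ j, ¬∃ m : ℤ, θ j = Real.pi * m) :
    ∀ M : ℝ, ∃ n : ℕ, 1 ≤ n ∧
      M < r ^ n * (∑ k, Complex.exp ((n : ℂ) * (θ k : ℂ) * Complex.I) * f k).re := by
  set z : Fin N → ℂ := fun k => exp (θ k * I)
  have hmul : ∀ j k, z j * z k ≠ 1 := by
    intro j k
    rw [exp_ofReal_mul_I_mul_exp_ofReal_mul_I, ne_eq, exp_ofReal_mul_I_eq_one_iff]
    rcases eq_or_ne j k with rfl | hjk
    · rintro ⟨m, hm⟩
      exact h₂ j ⟨m, by linarith⟩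
    · exact (h₁ j k hjk).2
  have hconj : ∀ j k, j ≠ k → z j * conj (z k) ≠ 1 := by
    intro j k hjk
    rw [exp_ofReal_mul_I_mul_conj_exp_ofReal_mul_I, ne_eq, exp_ofReal_mul_I_eq_one_iff]
    exact (h₁ j k hjk).1
  obtain ⟨δ, hδ, hfreq⟩ := exists_pos_frequently_le_re_sum_mul_pow f z hf
    (fun k => norm_exp_ofReal_mul_I (θ k)) hmul hconj
  intro M
  have hlarge := (tendsto_pow_atTop_atTop_of_one_lt hr).eventually_gt_atTop (M / δ)
  obtain ⟨n, hδn, hn, hMn⟩ := (hfreq.and_eventually ((eventually_ge_atTop 1).and hlarge)).exists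
  have hsum : ∑ k, exp (n * θ k * I) * f k = ∑ k, f k * z k ^ n :=
    sum_congr rfl fun k _ => by rw [mul_assoc, exp_nat_mul, mul_comm]
  refine ⟨n, hn, ?_⟩
  rw [hsum]
  calc M < r ^ n * δ := (div_lt_iff₀ hδ).1 hMn
    _ ≤ _ := by gcongr
end

section
/- Let z₁, ..., z_n be distinct complex numbers with |z_k| > 1, Im(z_k) ≠ 0 for all k, and z_k ≠ conj(z_j) for all j, k. Then for any complex numbers w₁, ..., w_n there exists a convex-polynomial p with p(z_k) = w_k for all k. -/
open Filter Finset Polynomial Set Topology ComplexConjugate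

theorem isConvexPoly_sum_C_mul_X_pow {s : Finset ℕ} {a : ℕ → ℝ} (ha : ∀ k ∈ s, 0 ≤ a k)
    (hsum : ∑ k ∈ s, a k = 1) : IsConvexPoly (∑ k ∈ s, C (a k : ℂ) * X ^ k) := by
  have hs : s ⊆ range (s.sup id + 1) := fun k hk ↦
    mem_range_succ_iff.2 (le_sup (f := id) hk)
  refine ⟨s.sup id, (s : Set ℕ).indicator a, fun k ↦ indicator_nonneg ha k, ?_, ?_⟩
  · rwa [sum_indicator_subset a hs]
  · rw [← sum_indicator_subset_of_eq_zero a (fun k r ↦ C (r : ℂ) * X ^ k) hs (by simp)]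

theorem Convex.eq_univ_of_dense {V : Type*} [NormedAddCommGroup V] [NormedSpace ℝ V]
    [FiniteDimensional ℝ V] {s : Set V} (hs : Convex ℝ s) (hd : Dense s) : s = univ := by
  have hspan : affineSpan ℝ s = ⊤ := by
    refine eq_top_iff.2 fun x _ ↦ ?_
    exact closure_minimal (subset_affineSpan ℝ s) (affineSpan ℝ s).closed_of_finiteDimensional
      (hd x)
  have hint := hs.interior_closure_eq_interior_of_nonempty_interior
    (hs.interior_nonempty_iff_affineSpan_eq_top.2 hspan)
  rw [hd.closure_eq, interior_univ] at hint
  exact eq_univ_of_univ_subset (hint ▸ interior_subset)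

theorem Convex.dense_of_forall_not_bddAbove_re {E : Type*} [NormedAddCommGroup E]
    [NormedSpace ℂ E] {s : Set E} (hs : Convex ℝ s) (hne : s.Nonempty)
    (h : ∀ f : StrongDual ℂ E, f ≠ 0 → ¬ BddAbove ((fun x ↦ (f x).re) '' s)) : Dense s := by
  refine dense_iff_closure_eq.2 (eq_univ_of_forall fun y ↦ ?_)
  by_contra hy
  obtain ⟨f, u, hfs, hfy⟩ :=
    RCLike.geometric_hahn_banach_closed_point (𝕜 := ℂ) hs.closure isClosed_closure hy
  obtain ⟨x, hx⟩ := hne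
  have hf : f ≠ 0 := by
    rintro rfl
    simpa using (hfs x (subset_closure hx)).trans hfy
  exact h f hf ⟨u, forall_mem_image.2 fun x hx ↦ (hfs x (subset_closure hx)).le⟩

theorem norm_geom_sum_le_of_norm_le_one {𝕜 : Type*} [NormedField 𝕜] {μ : 𝕜} (hμ : ‖μ‖ ≤ 1)
    (h1 : μ ≠ 1) (N : ℕ) : ‖∑ m ∈ range N, μ ^ m‖ ≤ 2 / ‖μ - 1‖ := by
  rw [geom_sum_eq h1, norm_div]
  gcongr
  calc ‖μ ^ N - 1‖ ≤ ‖μ ^ N‖ + ‖(1 : 𝕜)‖ := norm_sub_le _ _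
    _ ≤ 2 := by rw [norm_pow, norm_one]; linarith [pow_le_one₀ (norm_nonneg μ) hμ (n := N)]

theorem tendsto_cesaro_pow {μ : ℂ} (hμ : ‖μ‖ ≤ 1) :
    Tendsto (fun N : ℕ ↦ (N⁻¹ : ℝ) • ∑ m ∈ range N, μ ^ m) atTop
      (𝓝 (if μ = 1 then 1 else 0)) := by
  split_ifs with h1
  · simpa [h1] using (tendsto_const_nhds (x := (1 : ℂ))).cesaro_smul
  · have hlim := (tendsto_inv_atTop_nhds_zero_nat (𝕜 := ℝ)).mul_const (2 / ‖μ - 1‖)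
    rw [zero_mul] at hlim
    refine squeeze_zero_norm (fun N ↦ ?_) hlim
    rw [norm_smul, Real.norm_of_nonneg (by positivity)]
    gcongr
    exact norm_geom_sum_le_of_norm_le_one hμ h1 N

theorem tendsto_cesaro_sum_mul_pow {ι : Type*} (s : Finset ι) (c μ : ι → ℂ)
    (hμ : ∀ i ∈ s, ‖μ i‖ ≤ 1) :
    Tendsto (fun N : ℕ ↦ (N⁻¹ : ℝ) • ∑ m ∈ range N, ∑ i ∈ s, c i * μ i ^ m) atTop
      (𝓝 (∑ i ∈ s, if μ i = 1 then c i else 0)) := by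
  have hterm : ∀ N : ℕ, (N⁻¹ : ℝ) • ∑ m ∈ range N, ∑ i ∈ s, c i * μ i ^ m
      = ∑ i ∈ s, c i * ((N⁻¹ : ℝ) • ∑ m ∈ range N, μ i ^ m) := fun N ↦ by
    simp only [sum_comm (s := range N), smul_sum, mul_sum, mul_smul_comm]
  simp only [hterm]
  refine tendsto_finsetSum s fun i hi ↦ ?_
  simpa [mul_ite] using (tendsto_cesaro_pow (hμ i hi)).const_mul (c i)

theorem not_tendsto_max_zero_of_cesaro {h : ℕ → ℝ} {B L : ℝ} (hB : ∀ m, |h m| ≤ B)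
    (hmean : Tendsto (fun N : ℕ ↦ (N⁻¹ : ℝ) * ∑ m ∈ range N, h m) atTop (𝓝 0))
    (hsq : Tendsto (fun N : ℕ ↦ (N⁻¹ : ℝ) * ∑ m ∈ range N, h m ^ 2) atTop (𝓝 L))
    (hL : 0 < L) : ¬ Tendsto (fun m ↦ max (h m) 0) atTop (𝓝 0) := by
  intro hpos
  -- `|h| = 2 max h 0 - h`, and `h ^ 2 ≤ B |h|`
  have hsq_le : ∀ m, h m ^ 2 ≤ B * (2 * max (h m) 0 - h m) := fun m ↦ by
    have : |h m| = 2 * max (h m) 0 - h m := by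
      rcases le_total 0 (h m) with hm | hm
      · rw [abs_of_nonneg hm, max_eq_left hm]; ring
      · rw [abs_of_nonpos hm, max_eq_right hm]; ring
    rw [← this, ← sq_abs, sq]
    exact mul_le_mul_of_nonneg_right (hB m) (abs_nonneg _)
  have hrhs : Tendsto (fun N : ℕ ↦ (N⁻¹ : ℝ) * ∑ m ∈ range N, B * (2 * max (h m) 0 - h m))
      atTop (𝓝 (B * (2 * 0 - 0))) := by
    refine (((hpos.cesaro.const_mul 2).sub hmean).const_mul B).congr fun N ↦ ?_
    simp only [← mul_sum, sum_sub_distrib]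
    ring
  have := le_of_tendsto_of_tendsto' hsq hrhs fun N ↦
    mul_le_mul_of_nonneg_left (sum_le_sum fun m _ ↦ hsq_le m) (by positivity)
  linarith

theorem Filter.Tendsto.cesaro_re {u : ℕ → ℂ} {l : ℂ}
    (h : Tendsto (fun N : ℕ ↦ (N⁻¹ : ℝ) • ∑ m ∈ range N, u m) atTop (𝓝 l)) :
    Tendsto (fun N : ℕ ↦ (N⁻¹ : ℝ) * ∑ m ∈ range N, (u m).re) atTop (𝓝 l.re) :=
  ((Complex.continuous_re.tendsto l).comp h).congr fun N ↦ by simp [Complex.re_sum]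

theorem sum_mul_pow_mul_sum_mul_pow_s15 {R ι κ : Type*} [CommSemiring R] (s : Finset ι)
    (t : Finset κ) (a μ : ι → R) (b ν : κ → R) (m : ℕ) :
    (∑ i ∈ s, a i * μ i ^ m) * ∑ j ∈ t, b j * ν j ^ m
      = ∑ p ∈ s ×ˢ t, a p.1 * b p.2 * (μ p.1 * ν p.2) ^ m := by
  rw [sum_mul_sum, sum_product]
  refine sum_congr rfl fun i _ ↦ sum_congr rfl fun j _ ↦ ?_
  ring

theorem tendsto_cesaro_sum_mul_pow_mul_conj {ι : Type*} {s : Finset ι} {c μ : ι → ℂ}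
    (hμ : ∀ i ∈ s, ‖μ i‖ = 1) (hinj : InjOn μ s) :
    Tendsto (fun N : ℕ ↦ (N⁻¹ : ℝ) • ∑ m ∈ range N,
        (∑ i ∈ s, c i * μ i ^ m) * conj (∑ i ∈ s, c i * μ i ^ m)) atTop
      (𝓝 (∑ i ∈ s, ‖c i‖ ^ 2 : ℝ)) := by
  classical
  have hfreq : ∀ p ∈ s ×ˢ s, (μ p.1 * conj (μ p.2) = 1 ↔ p.1 = p.2) := fun p hp ↦ by
    obtain ⟨h1, h2⟩ := mem_product.1 hp
    rw [← Complex.inv_eq_conj (hμ _ h2), mul_inv_eq_one₀ (by simp [← norm_ne_zero_iff, hμ _ h2])]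
    exact hinj.eq_iff h1 h2
  have hlim := tendsto_cesaro_sum_mul_pow (s ×ˢ s) (fun p ↦ c p.1 * conj (c p.2))
    (fun p ↦ μ p.1 * conj (μ p.2)) fun p hp ↦ by
      obtain ⟨h1, h2⟩ := mem_product.1 hp
      simp [hμ _ h1, hμ _ h2]
  rw [sum_congr rfl fun p hp ↦ if_congr (hfreq p hp) rfl rfl, sum_product] at hlim
  simp only [sum_ite_eq, Complex.mul_conj'] at hlim
  rw [sum_ite_mem, Finset.inter_self] at hlim
  push_cast
  convert hlim using 4 with N m
  simp [map_sum, sum_mul_pow_mul_sum_mul_pow_s15]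

theorem not_tendsto_max_re_sum_mul_pow {ι : Type*} {s : Finset ι} {c μ : ι → ℂ}
    (hc : ∃ i ∈ s, c i ≠ 0) (hμ : ∀ i ∈ s, ‖μ i‖ = 1) (hinj : InjOn μ s)
    (hmul : ∀ i ∈ s, ∀ j ∈ s, μ i * μ j ≠ 1) :
    ¬ Tendsto (fun m ↦ max (∑ i ∈ s, c i * μ i ^ m).re 0) atTop (𝓝 0) := by
  set g : ℕ → ℂ := fun m ↦ ∑ i ∈ s, c i * μ i ^ m
  have hμle : ∀ i ∈ s, ‖μ i‖ ≤ 1 := fun i hi ↦ (hμ i hi).le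
  have hmean : Tendsto (fun N : ℕ ↦ (N⁻¹ : ℝ) • ∑ m ∈ range N, g m) atTop (𝓝 0) := by
    convert tendsto_cesaro_sum_mul_pow s c μ hμle
    refine (sum_eq_zero fun i hi ↦ if_neg fun h1 ↦ hmul i hi i hi ?_).symm
    rw [h1, one_mul]
  have hsq : Tendsto (fun N : ℕ ↦ (N⁻¹ : ℝ) • ∑ m ∈ range N, g m * g m) atTop (𝓝 0) := by
    have hμμ : ∀ p ∈ s ×ˢ s, ‖μ p.1 * μ p.2‖ ≤ 1 := fun p hp ↦ by
      obtain ⟨h1, h2⟩ := mem_product.1 hp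
      simp [hμ _ h1, hμ _ h2]
    convert tendsto_cesaro_sum_mul_pow (s ×ˢ s) (fun p ↦ c p.1 * c p.2)
      (fun p ↦ μ p.1 * μ p.2) hμμ using 2
    · simp only [g, sum_mul_pow_mul_sum_mul_pow_s15]
    · refine (sum_eq_zero fun p hp ↦ if_neg ?_).symm
      obtain ⟨h1, h2⟩ := mem_product.1 hp
      exact hmul _ h1 _ h2
  set W := ∑ i ∈ s, ‖c i‖ ^ 2
  have hW : 0 < W := by
    obtain ⟨i, hi, hci⟩ := hc
    exact sum_pos' (fun i _ ↦ by positivity) ⟨i, hi, by positivity⟩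
  -- `(re g) ^ 2 = re (g ^ 2 + |g| ^ 2) / 2`
  have hresq : Tendsto (fun N : ℕ ↦ (N⁻¹ : ℝ) * ∑ m ∈ range N, (g m).re ^ 2) atTop
      (𝓝 (W / 2)) := by
    have hsum : Tendsto (fun N : ℕ ↦ (N⁻¹ : ℝ) • ∑ m ∈ range N, (g m * g m + g m * conj (g m)))
        atTop (𝓝 (0 + (W : ℂ))) :=
      (hsq.add (tendsto_cesaro_sum_mul_pow_mul_conj hμ hinj)).congr fun N ↦ by
        rw [sum_add_distrib, smul_add]
    convert hsum.cesaro_re.div_const 2 using 1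
    · funext N
      rw [mul_div_assoc, sum_div]
      congr 1
      refine sum_congr rfl fun m _ ↦ ?_
      simp only [Complex.add_re, Complex.mul_re, Complex.conj_re, Complex.conj_im]
      ring
    · simp
  refine not_tendsto_max_zero_of_cesaro (B := ∑ i ∈ s, ‖c i‖) (fun m ↦ ?_) hmean.cesaro_re hresq
    (by positivity)
  calc |(g m).re| ≤ ‖g m‖ := Complex.abs_re_le_norm _
    _ ≤ ∑ i ∈ s, ‖c i * μ i ^ m‖ := norm_sum_le _ _
    _ = ∑ i ∈ s, ‖c i‖ := sum_congr rfl fun i hi ↦ by simp [hμ i hi]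

theorem not_bddAbove_re_sum_mul_pow_of_dominant {ι : Type*} [Fintype ι] {s : Finset ι}
    {c μ : ι → ℂ} {R : ℝ} (hR : 1 < R)
    (hs : ¬ Tendsto (fun m ↦ max (∑ i ∈ s, c i * μ i ^ m).re 0) atTop (𝓝 0))
    (htail : ∀ i ∉ s, c i = 0 ∨ ‖μ i‖ < 1) :
    ¬ BddAbove (range fun m ↦ (∑ i, c i * (R * μ i) ^ m).re) := by
  classical
  rintro ⟨M, hM⟩
  set tail : ℕ → ℂ := fun m ↦ ∑ i ∈ sᶜ, c i * μ i ^ m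
  have htail_lim : Tendsto tail atTop (𝓝 0) := by
    rw [← sum_const_zero (s := sᶜ)]
    refine tendsto_finsetSum _ fun i hi ↦ ?_
    rcases htail i (mem_compl.1 hi) with hc | hμ
    · simp [hc]
    · simpa using (tendsto_pow_atTop_nhds_zero_of_norm_lt_one hμ).const_mul (c i)
  have hR0 : 0 < R := by linarith
  have hsplit : ∀ m, ∑ i, c i * (R * μ i) ^ m
      = ((R ^ m : ℝ) : ℂ) * (∑ i ∈ s, c i * μ i ^ m + tail m) := fun m ↦ by
    rw [sum_add_sum_compl, mul_sum]
    push_cast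
    exact sum_congr rfl fun i _ ↦ by ring
  have hle : ∀ m, (∑ i ∈ s, c i * μ i ^ m).re ≤ M * R⁻¹ ^ m - (tail m).re := fun m ↦ by
    have hm := hM (mem_range_self m)
    rw [hsplit, Complex.re_ofReal_mul, Complex.add_re] at hm
    rw [inv_pow, ← div_eq_mul_inv, le_sub_iff_add_le, le_div_iff₀ (by positivity)]
    linarith
  have hbound : Tendsto (fun m ↦ max (M * R⁻¹ ^ m - (tail m).re) 0) atTop (𝓝 0) := by
    have := (((tendsto_pow_atTop_nhds_zero_of_lt_one (by positivity)
      (inv_lt_one_of_one_lt₀ hR)).const_mul M).sub (Complex.continuous_re.tendsto 0 |>.comp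
      htail_lim)).max (tendsto_const_nhds (x := (0 : ℝ)))
    simpa using this
  exact hs (tendsto_of_tendsto_of_tendsto_of_le_of_le tendsto_const_nhds hbound
    (fun m ↦ le_max_right _ _) fun m ↦ max_le_max (hle m) le_rfl)

theorem not_bddAbove_re_sum_mul_pow {ι : Type*} [Fintype ι] {z : ι → ℂ}
    (hinj : Function.Injective z) (habs : ∀ k, 1 < ‖z k‖) (hconj : ∀ j k, z k ≠ conj (z j))
    {c : ι → ℂ} (hc : c ≠ 0) : ¬ BddAbove (range fun m ↦ (∑ k, c k * z k ^ m).re) := by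
  classical
  obtain ⟨k₀, hk₀⟩ := Function.ne_iff.1 hc
  obtain ⟨k₁, hk₁, hmax⟩ := (univ.filter (c · ≠ 0)).exists_max_image (‖z ·‖) ⟨k₀, by simpa⟩
  set R := ‖z k₁‖
  have hR : 1 < R := habs k₁
  have hR0 : (R : ℂ) ≠ 0 := by exact_mod_cast (zero_lt_one.trans hR).ne'
  set s := univ.filter fun k ↦ c k ≠ 0 ∧ ‖z k‖ = R
  have hnorm : ∀ k, ‖z k / R‖ = ‖z k‖ / R := fun k ↦ by
    rw [norm_div, Complex.norm_real, Real.norm_of_nonneg (by linarith)]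
  have hdom := not_tendsto_max_re_sum_mul_pow (s := s) (c := c) (μ := (z · / R))
    ⟨k₁, mem_filter.2 ⟨mem_univ _, (mem_filter.1 hk₁).2, rfl⟩, (mem_filter.1 hk₁).2⟩
    (fun k hk ↦ by
      rw [hnorm, (mem_filter.1 hk).2.2, div_self (zero_lt_one.trans hR).ne'])
    (fun a _ b _ hab ↦ hinj ((div_left_inj' hR0).1 hab))
    (fun i hi j hj hij ↦ by
      rw [div_mul_div_comm, div_eq_one_iff_eq (mul_ne_zero hR0 hR0)] at hij
      have hzi : z i ≠ 0 := norm_ne_zero_iff.1 (by linarith [habs i])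
      refine hconj i j (mul_left_cancel₀ hzi ?_)
      rw [hij, Complex.mul_conj', (mem_filter.1 hi).2.2, sq])
  have := not_bddAbove_re_sum_mul_pow_of_dominant hR hdom fun k hk ↦ by
    by_cases hck : c k = 0
    · exact .inl hck
    refine .inr ((hnorm k).trans_lt ((div_lt_one (zero_lt_one.trans hR)).2 ?_))
    exact (hmax k (by simpa using hck)).lt_of_ne fun h ↦ hk (by simp [s, hck, h])
  simpa only [mul_div_cancel₀ _ hR0] using this

theorem dense_convexHull_range_pow {ι : Type*} [Fintype ι] {z : ι → ℂ}
    (hinj : Function.Injective z) (habs : ∀ k, 1 < ‖z k‖) (hconj : ∀ j k, z k ≠ conj (z j)) :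
    Dense (convexHull ℝ (range fun m k ↦ z k ^ m)) := by
  classical
  refine (convex_convexHull ℝ _).dense_of_forall_not_bddAbove_re
    ⟨_, subset_convexHull ℝ _ (mem_range_self 0)⟩ fun f hf hbdd ↦ ?_
  have hf_apply : ∀ v, f v = ∑ k, f (Pi.single k 1) * v k := fun v ↦ by
    conv_lhs => rw [← univ_sum_single v]
    refine (map_sum f _ _).trans (sum_congr rfl fun k _ ↦ ?_)
    rw [mul_comm, ← smul_eq_mul, ← map_smul, ← Pi.single_smul', smul_eq_mul, mul_one]
  refine not_bddAbove_re_sum_mul_pow hinj habs hconj (c := fun k ↦ f (Pi.single k 1)) ?_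
    (hbdd.mono ?_)
  · intro hc
    refine hf (ContinuousLinearMap.ext fun v ↦ ?_)
    rw [hf_apply v, zero_apply]
    exact sum_eq_zero fun k _ ↦ by rw [show f (Pi.single k 1) = 0 from congrFun hc k, zero_mul]
  · rintro _ ⟨m, rfl⟩
    exact ⟨_, subset_convexHull ℝ _ (mem_range_self m), congrArg Complex.re (hf_apply _)⟩

theorem convexPoly_interpolation_complex_general {n : ℕ} (z : Fin n → ℂ)
    (hdist : Function.Injective z)
    (habs : ∀ k, 1 < ‖z k‖)
    (hconj : ∀ j k, z k ≠ starRingEnd ℂ (z j))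
    (w : Fin n → ℂ) :
    ∃ p, IsConvexPoly p ∧ ∀ k, p.eval (z k) = w k := by
  have hw : w ∈ convexHull ℝ (range fun m k ↦ z k ^ m) := by
    have hd := dense_convexHull_range_pow hdist habs hconj
    exact eq_univ_iff_forall.1 ((convex_convexHull ℝ _).eq_univ_of_dense hd) w
  rw [convexHull_range_eq_exists_affineCombination] at hw
  obtain ⟨s, a, ha0, ha1, rfl⟩ := hw
  refine ⟨∑ m ∈ s, C (a m : ℂ) * X ^ m, isConvexPoly_sum_C_mul_X_pow ha0 ha1, fun k ↦ ?_⟩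
  rw [s.affineCombination_eq_linear_combination _ _ ha1]
  simp [eval_finsetSum]

/-- Interpolation of prescribed complex values by a convex-polynomial. -/
theorem convexPoly_interpolation_complex {n : ℕ} (z : Fin n → ℂ)
    (hdist : Function.Injective z)
    (habs : ∀ k, 1 < ‖z k‖)
    (him : ∀ k, (z k).im ≠ 0)
    (hconj : ∀ j k, z k ≠ starRingEnd ℂ (z j))
    (w : Fin n → ℂ) :
    ∃ p, IsConvexPoly p ∧ ∀ k, p.eval (z k) = w k :=
  convexPoly_interpolation_complex_general z hdist habs hconj w
end

section
/- For λ ∈ ℂ and m ≥ 2, the m×m Jordan block J_m(λ) is convex-cyclic on ℂᵐ if and only if |λ| > 1 and λ is not real. Moreover, when this holds, a vector v = (v₁, ..., v_m) is a convex-cyclic vector for J_m(λ) if and only if v₁ ≠ 0. -/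
/-- The `n × n` lower Jordan block with eigenvalue `λ`. -/
def JordanBlock (n : ℕ) (lam : ℂ) : Matrix (Fin n) (Fin n) ℂ :=
  fun i j => if i = j then lam else if (i : ℕ) = (j : ℕ) + 1 then 1 else 0

/-- `v` is a convex-cyclic vector for the matrix `T` on `ℂ^N`. -/
def IsConvexCyclicVector {N : ℕ} (T : Matrix (Fin N) (Fin N) ℂ) (v : Fin N → ℂ) : Prop :=
  Dense {w : Fin N → ℂ | ∃ p, IsConvexPoly p ∧ (Polynomial.aeval T p).mulVec v = w}

/-!
Write `J_m(λ) = λ + N` with `N` the nilpotent shift. By the binomial theorem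
`J^k v = T_v w_k`, where `w_k = (C(k, j) λ^(k-j))_j` and `T_v` is the lower triangular Toeplitz
matrix with first column `v`, invertible iff `v₁ ≠ 0`; and since the convex-polynomials form the
convex hull of the monomials, `v` is convex-cyclic iff the convex hull of `{J^k v}` is dense.

Necessity: the first coordinate of `J^k v` is `λ^k v₁`, and these points lie in the disc of
radius `|v₁|` if `|λ| ≤ 1`, and on the real line through `v₁` if `λ` is real or `v₁ = 0`.

Sufficiency: by Hahn–Banach it suffices that every nonzero real functional `F` is unbounded
above on `{w_k}`. Write `F(w_k) = ∑ⱼ C(k, j) gⱼ(λ^(k-j))` and let `J` be the largest index with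
`g_J ≠ 0`. The `J`-th term dominates, since `C(k, j) = o(C(k, J))` for `j < J`, and
`g_J(λ^n) ≥ c |λ|^n` for infinitely many `n`: the arguments `n θ` of `λ^n`, with
`0 < |θ| < π`, keep returning to within `|θ| / 2` of any given angle.
-/

open Polynomial Set Filter Topology Asymptotics Matrix Real ComplexConjugate
open scoped ComplexOrder

/-- Under `ComplexOrder`, `0 ≤ z` means that `z` is a nonnegative real number. -/
theorem isConvexPoly_iff {p : ℂ[X]} :
    IsConvexPoly p ↔ (∀ k, 0 ≤ p.coeff k) ∧ p.eval 1 = 1 := by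
  constructor
  · rintro ⟨n, a, ha0, ha1, rfl⟩
    refine ⟨fun k => ?_, ?_⟩
    · simp only [finsetSum_coeff, coeff_C_mul_X_pow, Finset.sum_ite_eq, Finset.mem_range]
      split_ifs
      exacts [Complex.zero_le_real.2 (ha0 k), le_rfl]
    · simp [eval_finsetSum, ← Complex.ofReal_sum, ha1]
  · rintro ⟨hp0, hp1⟩
    have hreal : ∀ k, ((p.coeff k).re : ℂ) = p.coeff k := fun k =>
      Complex.ext rfl (Complex.nonneg_iff.1 (hp0 k)).2
    refine ⟨p.natDegree, fun k => (p.coeff k).re, fun k => (Complex.nonneg_iff.1 (hp0 k)).1,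
      ?_, ?_⟩
    · rw [eval_eq_sum_range] at hp1
      simpa using congrArg Complex.re hp1
    · simp_rw [hreal]
      exact as_sum_range_C_mul_X_pow p

theorem convex_setOf_isConvexPoly : Convex ℝ {p : ℂ[X] | IsConvexPoly p} := by
  intro p hp q hq a b ha hb hab
  rw [mem_ofPred_eq, isConvexPoly_iff] at *
  refine ⟨fun k => ?_, ?_⟩
  · simp only [coeff_add, coeff_smul, Complex.real_smul]
    exact add_nonneg (mul_nonneg (Complex.zero_le_real.2 ha) (hp.1 k))
      (mul_nonneg (Complex.zero_le_real.2 hb) (hq.1 k))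
  · simp [eval_smul, hp.2, hq.2, ← Complex.ofReal_add, hab]

theorem setOf_isConvexPoly_eq_convexHull :
    {p : ℂ[X] | IsConvexPoly p} = convexHull ℝ (range fun k : ℕ => (X ^ k : ℂ[X])) := by
  refine Subset.antisymm ?_ (convexHull_min ?_ convex_setOf_isConvexPoly)
  · rintro _ ⟨n, a, ha0, ha1, rfl⟩
    have hsmul : ∀ k, C (a k : ℂ) * X ^ k = a k • (X ^ k : ℂ[X]) := fun k => by
      rw [← smul_eq_C_mul, Complex.coe_smul]
    simp only [hsmul]
    exact (convex_convexHull ℝ _).sum_mem (fun k _ => ha0 k) ha1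
      fun k _ => subset_convexHull ℝ _ ⟨k, rfl⟩
  · rintro _ ⟨k, rfl⟩
    refine isConvexPoly_iff.2 ⟨fun i => ?_, by simp⟩
    rw [coeff_X_pow]
    split_ifs <;> norm_num

theorem isConvexCyclicVector_iff_dense_convexHull {N : ℕ} (T : Matrix (Fin N) (Fin N) ℂ)
    (v : Fin N → ℂ) :
    IsConvexCyclicVector T v ↔ Dense (convexHull ℝ (range fun k : ℕ => (T ^ k) *ᵥ v)) := by
  let L : ℂ[X] →ₗ[ℝ] Fin N → ℂ :=
    (LinearMap.applyₗ v ∘ₗ Matrix.toLin'.toLinearMap ∘ₗ (aeval T).toLinearMap).restrictScalars ℝ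
  have hL : ∀ p, L p = aeval T p *ᵥ v := fun _ => rfl
  have hset : {w | ∃ p, IsConvexPoly p ∧ aeval T p *ᵥ v = w}
      = L '' convexHull ℝ (range fun k : ℕ => (X ^ k : ℂ[X])) := by
    simp only [← setOf_isConvexPoly_eq_convexHull, hL]
    rfl
  rw [IsConvexCyclicVector, hset, L.image_convexHull, ← range_comp]
  simp only [Function.comp_def, hL, map_pow, aeval_X]

theorem dense_convexHull_of_forall_not_bddAbove {E : Type*} [TopologicalSpace E]
    [AddCommGroup E] [Module ℝ E] [IsTopologicalAddGroup E] [ContinuousSMul ℝ E]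
    [LocallyConvexSpace ℝ E] {s : Set E} (hs : s.Nonempty)
    (h : ∀ f : StrongDual ℝ E, f ≠ 0 → ¬ BddAbove (f '' s)) : Dense (convexHull ℝ s) := by
  by_contra hdense
  obtain ⟨x, hx⟩ : ∃ x, x ∉ closure (convexHull ℝ s) := by
    simpa [dense_iff_closure_eq, Set.eq_univ_iff_forall] using hdense
  obtain ⟨f, u, hfu, hux⟩ :=
    geometric_hahn_banach_closed_point (convex_convexHull ℝ s).closure isClosed_closure hx
  have hbound : ∀ a ∈ s, f a < u := fun a ha =>
    hfu a (subset_closure (subset_convexHull ℝ s ha))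
  obtain ⟨a, ha⟩ := hs
  refine h f (fun hf => ?_) ⟨u, forall_mem_image.2 fun a ha => (hbound a ha).le⟩
  simpa [hf] using (hbound a ha).trans hux

theorem not_dense_convexHull_of_subset {E : Type*} [TopologicalSpace E] [AddCommGroup E]
    [Module ℝ E] {s C : Set E} (hs : s ⊆ C) (hC : Convex ℝ C) (hCc : IsClosed C)
    (hCu : C ≠ univ) : ¬ Dense (convexHull ℝ s) := fun hd =>
  hCu <| by simpa [hCc.closure_eq] using (hd.mono (convexHull_min hs hC)).closure_eq

theorem jordanBlock_eq_smul_one_add (m : ℕ) (lam : ℂ) :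
    JordanBlock m lam = lam • 1 + JordanBlock m 0 := by
  ext i j
  by_cases h : i = j <;> simp [JordanBlock, one_apply, h]

theorem jordanBlock_zero_apply {m : ℕ} (i j : Fin m) :
    JordanBlock m 0 i j = if (i : ℕ) = j + 1 then 1 else 0 := by
  rcases eq_or_ne i j with rfl | h
  · simp [JordanBlock]
  · simp [JordanBlock, h]

theorem jordanBlock_zero_mulVec_apply {m : ℕ} (w : Fin m → ℂ) (i : Fin m) :
    (JordanBlock m 0 *ᵥ w) i = if h : 1 ≤ (i : ℕ) then w ⟨i - 1, by omega⟩ else 0 := by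
  rw [mulVec, dotProduct]
  split_ifs with h
  · rw [Finset.sum_eq_single ⟨i - 1, by omega⟩]
    · rw [jordanBlock_zero_apply, if_pos (by dsimp only; omega), one_mul]
    · intro j _ hj
      rw [jordanBlock_zero_apply, if_neg fun h' => hj (Fin.ext (by dsimp only; omega)), zero_mul]
    · simp
  · exact Finset.sum_eq_zero fun j _ => by rw [jordanBlock_zero_apply, if_neg (by omega), zero_mul]

theorem jordanBlock_zero_pow_mulVec_apply {m : ℕ} (q : ℕ) (w : Fin m → ℂ) (i : Fin m) :
    (JordanBlock m 0 ^ q *ᵥ w) i = if h : q ≤ (i : ℕ) then w ⟨i - q, by omega⟩ else 0 := by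
  induction q generalizing i with
  | zero => simp
  | succ q ih =>
    rw [pow_succ', ← mulVec_mulVec, jordanBlock_zero_mulVec_apply]
    split_ifs with h₁ h₂ h₂
    · rw [ih, dif_pos (show q ≤ (i : ℕ) - 1 by omega)]
      congr 1
      ext
      dsimp only
      omega
    · rw [ih, dif_neg (by dsimp only; omega)]
    · omega
    · rfl

/-- The first column of `JordanBlock m lam ^ k`. -/
def binomialVec (m : ℕ) (lam : ℂ) (k : ℕ) : Fin m → ℂ :=
  fun j => (k.choose j : ℂ) * lam ^ (k - j)

def lowerToeplitz {m : ℕ} (v : Fin m → ℂ) : Matrix (Fin m) (Fin m) ℂ :=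
  of fun i j => (JordanBlock m 0 ^ (j : ℕ) *ᵥ v) i

theorem jordanBlock_pow_mulVec {m : ℕ} (lam : ℂ) (k : ℕ) (v : Fin m → ℂ) :
    JordanBlock m lam ^ k *ᵥ v = lowerToeplitz v *ᵥ binomialVec m lam k := by
  have hcomm : Commute (JordanBlock m 0) (lam • 1) := (Commute.one_right _).smul_right lam
  ext i
  let F : ℕ → ℂ := fun j => (JordanBlock m 0 ^ j *ᵥ v) i * ((k.choose j : ℂ) * lam ^ (k - j))
  have hF_choose : ∀ j, k < j → F j = 0 := fun j hj => by simp [F, Nat.choose_eq_zero_of_lt hj]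
  have hF_shift : ∀ j, m ≤ j → F j = 0 := fun j hj => by
    simp only [F, jordanBlock_zero_pow_mulVec_apply, dif_neg (show ¬ j ≤ (i : ℕ) by omega),
      zero_mul]
  calc (JordanBlock m lam ^ k *ᵥ v) i
      = ∑ j ∈ Finset.range (k + 1), F j := by
        rw [jordanBlock_eq_smul_one_add, add_comm, hcomm.add_pow, sum_mulVec, Finset.sum_apply]
        refine Finset.sum_congr rfl fun j _ => ?_
        rw [← mulVec_mulVec, natCast_mulVec, _root_.smul_pow, one_pow, mul_smul_one, smul_mulVec,
          mulVec_smul]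
        simp only [Pi.smul_apply, smul_eq_mul, F]
        ring
    _ = ∑ j ∈ Finset.range (k + 1 + m), F j :=
        Finset.sum_subset (Finset.range_subset_range.2 (by omega)) fun j _ hj =>
          hF_choose j (by simpa using hj)
    _ = ∑ j ∈ Finset.range m, F j :=
        (Finset.sum_subset (Finset.range_subset_range.2 (by omega)) fun j _ hj =>
          hF_shift j (by simpa using hj)).symm
    _ = (lowerToeplitz v *ᵥ binomialVec m lam k) i := by
        rw [← Fin.sum_univ_eq_sum_range]
        rfl

theorem lowerToeplitz_apply {m : ℕ} (v : Fin m → ℂ) (i j : Fin m) :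
    lowerToeplitz v i j = if h : (j : ℕ) ≤ i then v ⟨i - j, by omega⟩ else 0 :=
  jordanBlock_zero_pow_mulVec_apply _ _ _

theorem det_lowerToeplitz {m : ℕ} (hm : 0 < m) (v : Fin m → ℂ) :
    (lowerToeplitz v).det = v ⟨0, hm⟩ ^ m := by
  rw [det_of_isLowerTriangular _ fun i j hij => ?_]
  · simp only [lowerToeplitz_apply, le_refl, dif_pos, Nat.sub_self]
    exact Fin.prod_const m (v ⟨0, hm⟩)
  · exact (lowerToeplitz_apply v i j).trans (dif_neg (not_le.2 hij))

theorem jordanBlock_pow_mulVec_apply_zero {m : ℕ} (hm : 0 < m) (lam : ℂ) (k : ℕ)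
    (v : Fin m → ℂ) : (JordanBlock m lam ^ k *ᵥ v) ⟨0, hm⟩ = lam ^ k * v ⟨0, hm⟩ := by
  rw [jordanBlock_pow_mulVec, mulVec, dotProduct, Finset.sum_eq_single ⟨0, hm⟩]
  · simp [lowerToeplitz_apply, binomialVec, mul_comm]
  · intro j _ hj
    rw [lowerToeplitz_apply, dif_neg (fun h => hj (Fin.ext (by simpa using h))), zero_mul]
  · simp

theorem exists_nat_ge_abs_add_nat_mul_sub_le {θ : ℝ} (hθ : 0 < θ) (ψ : ℝ) (N : ℕ) :
    ∃ n ≥ N, ∃ K : ℤ, |ψ + n * θ - K * (2 * π)| ≤ θ / 2 := by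
  set K : ℤ := ⌈(ψ + θ / 2 + N * θ) / (2 * π)⌉
  have hK : ψ + θ / 2 + N * θ ≤ K * (2 * π) := by
    rw [← div_le_iff₀ (by positivity)]
    exact Int.le_ceil _
  set x := (K * (2 * π) - ψ - θ / 2) / θ
  have hNx : (N : ℝ) ≤ x := by
    rw [le_div_iff₀ hθ]
    linarith
  have hx : x * θ = K * (2 * π) - ψ - θ / 2 := div_mul_cancel₀ _ hθ.ne'
  have hn₁ : x ≤ ⌈x⌉₊ := Nat.le_ceil x
  have hn₂ : (⌈x⌉₊ : ℝ) < x + 1 := Nat.ceil_lt_add_one ((N.cast_nonneg).trans hNx)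
  refine ⟨⌈x⌉₊, by exact_mod_cast hNx.trans hn₁, K, abs_le.2 ⟨?_, ?_⟩⟩ <;> nlinarith

theorem frequently_cos_le_cos_add_nat_mul {θ : ℝ} (hθ : θ ≠ 0) (hθπ : |θ| ≤ 2 * π) (ψ : ℝ) :
    ∃ᶠ n : ℕ in atTop, cos (|θ| / 2) ≤ cos (ψ + n * θ) := by
  refine frequently_atTop.2 fun N => ?_
  obtain ⟨n, hn, K, hK⟩ : ∃ n ≥ N, ∃ K : ℤ, |ψ + n * θ - K * (2 * π)| ≤ |θ| / 2 := by
    rcases hθ.lt_or_gt with hneg | hpos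
    · obtain ⟨n, hn, K, hK⟩ := exists_nat_ge_abs_add_nat_mul_sub_le (neg_pos.2 hneg) (-ψ) N
      refine ⟨n, hn, -K, ?_⟩
      rw [abs_of_neg hneg, ← abs_neg]
      convert hK using 2
      push_cast
      ring
    · obtain ⟨n, hn, K, hK⟩ := exists_nat_ge_abs_add_nat_mul_sub_le hpos ψ N
      exact ⟨n, hn, K, by rwa [abs_of_pos hpos]⟩
  refine ⟨n, hn, ?_⟩
  rw [← cos_sub_int_mul_two_pi (ψ + n * θ) K, ← cos_abs (ψ + n * θ - K * (2 * π))]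
  exact cos_le_cos_of_nonneg_of_le_pi (abs_nonneg _) (by linarith) hK

theorem exists_frequently_le_apply_pow {g : ℂ →L[ℝ] ℝ} (hg : g ≠ 0) {z : ℂ} (hz : z.im ≠ 0) :
    ∃ c > 0, ∃ᶠ n : ℕ in atTop, c * ‖z‖ ^ n ≤ g (z ^ n) := by
  -- Riesz representation: `g x = re (x * conj w)`.
  set w := (InnerProductSpace.toDual ℝ ℂ).symm g
  have hw : w ≠ 0 := by simpa [w] using hg
  set θ := Complex.arg z
  set ψ := Complex.arg (conj w)
  have hθ : θ ≠ 0 := fun h => hz (Complex.arg_eq_zero_iff.1 h).2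
  have hθπ : |θ| < π := abs_lt.2 ⟨Complex.neg_pi_lt_arg z, Complex.arg_lt_pi_iff.2 (Or.inr hz)⟩
  have hpow : ∀ n : ℕ, g (z ^ n) = ‖w‖ * cos (ψ + n * θ) * ‖z‖ ^ n := fun n => by
    have hexp : Complex.exp (↑(ψ + n * θ) * Complex.I)
        = Complex.exp (ψ * Complex.I) * Complex.exp (θ * Complex.I) ^ n := by
      rw [← Complex.exp_nat_mul, ← Complex.exp_add]
      push_cast
      ring_nf
    have hprod : z ^ n * conj w
        = ((‖w‖ * ‖z‖ ^ n : ℝ) : ℂ) * Complex.exp (↑(ψ + n * θ) * Complex.I) := by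
      rw [hexp]
      conv_lhs => rw [← Complex.norm_mul_exp_arg_mul_I z, ← Complex.norm_mul_exp_arg_mul_I (conj w)]
      rw [Complex.norm_conj]
      push_cast
      ring
    rw [← InnerProductSpace.toDual_symm_apply, Complex.inner, hprod, Complex.re_ofReal_mul,
      Complex.exp_ofReal_mul_I_re]
    ring
  refine ⟨‖w‖ * cos (|θ| / 2), mul_pos (norm_pos_iff.2 hw) (cos_pos_of_mem_Ioo ⟨?_, ?_⟩), ?_⟩
  · linarith [abs_nonneg θ, pi_pos]
  · linarith
  refine (frequently_cos_le_cos_add_nat_mul hθ (by linarith [pi_pos]) ψ).mono fun n hn => ?_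
  rw [hpow]
  gcongr

theorem isLittleO_choose_choose_succ (i : ℕ) :
    (fun k : ℕ => (k.choose i : ℝ)) =o[atTop] fun k => (k.choose (i + 1) : ℝ) := by
  have hlim : Tendsto (fun k : ℕ => (i + 1 : ℝ) / (k - i)) atTop (𝓝 0) :=
    tendsto_const_nhds.div_atTop (tendsto_atTop_add_const_right _ _ tendsto_natCast_atTop_atTop)
  refine (isLittleO_iff_tendsto' ?_).2 (hlim.congr' ?_)
  · filter_upwards [eventually_ge_atTop (i + 1)] with k hk h0
    exact absurd h0 (Nat.cast_ne_zero.2 (Nat.choose_pos hk).ne')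
  · filter_upwards [eventually_gt_atTop i] with k hk
    have hrec := congrArg (Nat.cast : ℕ → ℝ) (Nat.choose_succ_right_eq k i)
    push_cast [Nat.cast_sub hk.le] at hrec
    have hik : (i : ℝ) < k := by exact_mod_cast hk
    rw [div_eq_div_iff (by linarith) (Nat.cast_ne_zero.2 (Nat.choose_pos hk).ne')]
    linarith

theorem isLittleO_choose_choose {j J : ℕ} (h : j < J) :
    (fun k : ℕ => (k.choose j : ℝ)) =o[atTop] fun k => (k.choose J : ℝ) := by
  induction J, h using Nat.le_induction with
  | base => exact isLittleO_choose_choose_succ j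
  | succ J _ ih => exact ih.trans (isLittleO_choose_choose_succ J)

theorem apply_binomialVec (g : ℂ →L[ℝ] ℝ) {m : ℕ} (lam : ℂ) (k : ℕ) (j : Fin m) :
    g (binomialVec m lam k j) = k.choose j * g (lam ^ (k - j)) := by
  rw [binomialVec, ← Complex.ofReal_natCast, ← Complex.real_smul, map_smul, smul_eq_mul]

theorem isBigO_apply_pow_sub (g : ℂ →L[ℝ] ℝ) {lam : ℂ} (hlam : 1 ≤ ‖lam‖) (i j : ℕ) :
    (fun k : ℕ => g (lam ^ (k - i))) =O[atTop] fun k => ‖lam‖ ^ (k - j) := by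
  refine IsBigO.of_bound (‖g‖ * ‖lam‖ ^ j) ?_
  filter_upwards [eventually_ge_atTop j] with k hk
  calc ‖g (lam ^ (k - i))‖ ≤ ‖g‖ * ‖lam‖ ^ (k - i) := by
        simpa [norm_pow] using g.le_opNorm (lam ^ (k - i))
    _ ≤ ‖g‖ * ‖lam‖ ^ (j + (k - j)) := by
        gcongr
        omega
    _ = ‖g‖ * ‖lam‖ ^ j * ‖‖lam‖ ^ (k - j)‖ := by
        rw [pow_add, norm_pow, norm_norm]
        ring

theorem not_bddAbove_range_sum_apply_binomialVec {m : ℕ} {lam : ℂ} (hlam : 1 < ‖lam‖)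
    (him : lam.im ≠ 0) (g : Fin m → ℂ →L[ℝ] ℝ) (J : Fin m) (hJ : g J ≠ 0)
    (hJmax : ∀ j, J < j → g j = 0) :
    ¬ BddAbove (range fun k : ℕ => ∑ j, g j (binomialVec m lam k j)) := by
  set r := ‖lam‖
  set φ : ℕ → ℝ := fun k => k.choose J * r ^ (k - J)
  have hrest : (fun k => ∑ j ∈ Finset.univ.erase J, g j (binomialVec m lam k j)) =o[atTop] φ := by
    refine IsLittleO.fun_sum fun j hj => ?_
    rcases lt_or_gt_of_ne (Finset.ne_of_mem_erase hj) with hlt | hgt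
    · simp_rw [apply_binomialVec]
      exact (isLittleO_choose_choose hlt).mul_isBigO (isBigO_apply_pow_sub (g j) hlam.le j J)
    · simp [hJmax j hgt]
  obtain ⟨c, hc, hfreq⟩ := exists_frequently_le_apply_pow hJ him
  have hmain : ∃ᶠ k in atTop, c * φ k ≤ g J (binomialVec m lam k J) := by
    refine (tendsto_add_atTop_nat (J : ℕ)).frequently (hfreq.mono fun n hn => ?_)
    simp only [φ, apply_binomialVec, Nat.add_sub_cancel]
    rw [mul_left_comm]
    exact mul_le_mul_of_nonneg_left hn (Nat.cast_nonneg _)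
  have hgrow : Tendsto (fun k : ℕ => c / 2 * r ^ (k - J : ℕ)) atTop atTop :=
    ((tendsto_pow_atTop_atTop_of_one_lt hlam).comp (tendsto_sub_atTop_nat J)).const_mul_atTop
      (half_pos hc)
  rintro ⟨B, hB⟩
  obtain ⟨k, hk_main, hk_rest, hk_big, hkJ⟩ := (hmain.and_eventually
    ((hrest.bound (half_pos hc)).and ((hgrow.eventually_gt_atTop B).and
      (eventually_ge_atTop (J : ℕ))))).exists
  have hsum : ∑ j, g j (binomialVec m lam k j) ≤ B := hB ⟨k, rfl⟩
  rw [← Finset.add_sum_erase _ _ (Finset.mem_univ J)] at hsum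
  have hφ : r ^ (k - J) ≤ φ k :=
    le_mul_of_one_le_left (by positivity) (by exact_mod_cast Nat.choose_pos hkJ)
  rw [Real.norm_of_nonneg (by positivity : 0 ≤ φ k), Real.norm_eq_abs] at hk_rest
  nlinarith [(abs_le.1 hk_rest).1]

theorem dense_convexHull_range_binomialVec {m : ℕ} {lam : ℂ} (hlam : 1 < ‖lam‖)
    (him : lam.im ≠ 0) : Dense (convexHull ℝ (range (binomialVec m lam))) := by
  refine dense_convexHull_of_forall_not_bddAbove (range_nonempty _) fun F hF => ?_
  let g : Fin m → ℂ →L[ℝ] ℝ := fun j => F.comp (ContinuousLinearMap.single ℝ (fun _ => ℂ) j)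
  have hF_eq : ∀ x, F x = ∑ j, g j (x j) := fun x => by
    conv_lhs => rw [← Finset.univ_sum_single x]
    simp [g]
  obtain ⟨J, hJ, hJmax⟩ : ∃ J, g J ≠ 0 ∧ ∀ j, J < j → g j = 0 := by
    classical
    obtain ⟨j₀, hj₀⟩ : ∃ j, g j ≠ 0 := by
      by_contra! hall
      exact hF (ContinuousLinearMap.ext fun x => by simp [hF_eq, hall])
    obtain ⟨J, hJ, hmax⟩ := Finset.exists_max_image (Finset.univ.filter fun j => g j ≠ 0) id
      ⟨j₀, by simpa using hj₀⟩
    refine ⟨J, (Finset.mem_filter.1 hJ).2, fun j hj => ?_⟩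
    by_contra hgj
    exact absurd (hmax j (by simp [hgj])) (not_le.2 hj)
  rw [← range_comp]
  simpa [Function.comp_def, hF_eq] using
    not_bddAbove_range_sum_apply_binomialVec hlam him g J hJ hJmax

theorem one_lt_norm_and_im_ne_zero_of_dense_convexHull {lam z : ℂ}
    (h : Dense (convexHull ℝ (range fun k : ℕ => lam ^ k * z))) :
    (1 < ‖lam‖ ∧ lam.im ≠ 0) ∧ z ≠ 0 := by
  have hball : ¬ ‖lam‖ ≤ 1 := fun hle => by
    refine not_dense_convexHull_of_subset (C := Metric.closedBall 0 ‖z‖) ?_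
      (convex_closedBall 0 _) Metric.isClosed_closedBall ?_ h
    · rintro _ ⟨k, rfl⟩
      simpa [norm_pow] using mul_le_of_le_one_left (norm_nonneg z) (pow_le_one₀ (norm_nonneg _) hle)
    · intro huniv
      have : ((‖z‖ + 1 : ℝ) : ℂ) ∈ Metric.closedBall 0 ‖z‖ := huniv ▸ mem_univ _
      rw [Metric.mem_closedBall, dist_zero_right, Complex.norm_real,
        Real.norm_of_nonneg (by positivity)] at this
      linarith
  have hline : ¬ (lam.im = 0 ∨ z = 0) := fun hreal => by
    refine not_dense_convexHull_of_subset (C := (Submodule.span ℝ {z} : Set ℂ)) ?_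
      (Submodule.convex _) (Submodule.closed_of_finiteDimensional _) ?_ h
    · rintro _ ⟨k, rfl⟩
      rcases hreal with him | rfl
      · have hlam : lam = (lam.re : ℂ) := Complex.ext rfl (by simp [him])
        show lam ^ k * z ∈ _
        rw [hlam, ← Complex.ofReal_pow, ← Complex.real_smul]
        exact Submodule.smul_mem _ _ (Submodule.mem_span_singleton_self z)
      · simp
    · intro huniv
      have hdim := finrank_span_le_card (R := ℝ) ({z} : Set ℂ)
      rw [Submodule.coe_eq_univ.1 huniv, finrank_top, Complex.finrank_real_complex] at hdim
      simp at hdim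
  exact ⟨⟨not_le.1 hball, (not_or.1 hline).1⟩, (not_or.1 hline).2⟩

theorem IsConvexCyclicVector.dense_convexHull_range_pow_mul {m : ℕ} (hm : 0 < m) {lam : ℂ}
    {v : Fin m → ℂ} (hv : IsConvexCyclicVector (JordanBlock m lam) v) :
    Dense (convexHull ℝ (range fun k : ℕ => lam ^ k * v ⟨0, hm⟩)) := by
  rw [isConvexCyclicVector_iff_dense_convexHull] at hv
  let π₀ : (Fin m → ℂ) →ₗ[ℝ] ℂ := LinearMap.proj ⟨0, hm⟩
  have hrange : (range fun k : ℕ => lam ^ k * v ⟨0, hm⟩)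
      = π₀ '' range fun k : ℕ => JordanBlock m lam ^ k *ᵥ v := by
    rw [← range_comp]
    exact congrArg range (funext fun k => (jordanBlock_pow_mulVec_apply_zero hm lam k v).symm)
  rw [hrange, ← π₀.image_convexHull]
  exact (Function.surjective_eval _).denseRange.dense_image (continuous_apply _) hv

theorem isConvexCyclicVector_jordanBlock {m : ℕ} (hm : 0 < m) {lam : ℂ} (hlam : 1 < ‖lam‖)
    (him : lam.im ≠ 0) {v : Fin m → ℂ} (hv : v ⟨0, hm⟩ ≠ 0) :
    IsConvexCyclicVector (JordanBlock m lam) v := by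
  rw [isConvexCyclicVector_iff_dense_convexHull]
  let Φ : (Fin m → ℂ) →ₗ[ℝ] Fin m → ℂ := (lowerToeplitz v).mulVecLin.restrictScalars ℝ
  have hrange :
      (range fun k : ℕ => JordanBlock m lam ^ k *ᵥ v) = Φ '' range (binomialVec m lam) := by
    rw [← range_comp]
    exact congrArg range (funext fun k => jordanBlock_pow_mulVec lam k v)
  have hΦ : Function.Surjective Φ := by
    refine mulVec_surjective_iff_isUnit.2 ((isUnit_iff_isUnit_det _).2 ?_)
    rw [det_lowerToeplitz hm]
    exact (pow_ne_zero _ hv).isUnit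
  rw [hrange, ← Φ.image_convexHull]
  exact hΦ.denseRange.dense_image (Φ.continuous_of_finiteDimensional)
    (dense_convexHull_range_binomialVec hlam him)

theorem jordanBlock_isConvexCyclicVector_iff {m : ℕ} (hm : 0 < m) (lam : ℂ) (v : Fin m → ℂ) :
    IsConvexCyclicVector (JordanBlock m lam) v ↔ (1 < ‖lam‖ ∧ lam.im ≠ 0) ∧ v ⟨0, hm⟩ ≠ 0 :=
  ⟨fun hv => one_lt_norm_and_im_ne_zero_of_dense_convexHull (hv.dense_convexHull_range_pow_mul hm),
    fun ⟨⟨hlam, him⟩, hv⟩ => isConvexCyclicVector_jordanBlock hm hlam him hv⟩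

/-- Convex-cyclic Jordan blocks (the complex case). -/
theorem jordanBlock_convexCyclic_iff (m : ℕ) (hm : 2 ≤ m) (lam : ℂ) :
    ((∃ v, IsConvexCyclicVector (JordanBlock m lam) v) ↔
      (1 < ‖lam‖ ∧ lam.im ≠ 0)) ∧
    ((1 < ‖lam‖ ∧ lam.im ≠ 0) →
      ∀ v : Fin m → ℂ,
        IsConvexCyclicVector (JordanBlock m lam) v ↔ v ⟨0, by omega⟩ ≠ 0) := by
  have hm₀ : 0 < m := by omega
  refine ⟨⟨fun ⟨v, hv⟩ => ((jordanBlock_isConvexCyclicVector_iff hm₀ lam v).1 hv).1,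
    fun h => ⟨Pi.single ⟨0, hm₀⟩ 1, (jordanBlock_isConvexCyclicVector_iff hm₀ lam _).2 ⟨h, ?_⟩⟩⟩,
    fun h v => (jordanBlock_isConvexCyclicVector_iff hm₀ lam v).trans (and_iff_right h)⟩
  simp
end
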